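/- arXiv:0707.1577 — 5 statements merged into one kernel-verified Lean document; each statement's English description precedes it below -/
import Mathlib

section
/- Let G be a digraph such that d^+(x) + d^-(x) ≥ |G| + 3 for every vertex x, and d^+(x) + d^-(y) ≥ |G| + 1 for every pair of vertices x, y. Let z_1 and z_2 be distinct vertices of G such that z_1z_2 is not an edge of G. Then there exists a vertex a that is an out-neighbour of z_1 and an in-neighbour of z_2 such that the digraph G - {z_1, z_2, a} is strongly connected. -/
/-- `l` is a directed cycle in the digraph with edge relation `A`: at least two
distinct vertices, with consecutive vertices (cyclically) joined by edges. -/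
def IsCycleList {V : Type*} (A : V → V → Prop) (l : List V) : Prop :=
  2 ≤ l.length ∧ l.Nodup ∧ l.Chain' A ∧
    ∀ a ∈ l.getLast?, ∀ b ∈ l.head?, A a b

/-- The cycle `l` encounters the vertices `s 0, …, s (k-1)` in this cyclic order:
some rotation of `l` contains them as a sublist in this order. -/
def EncountersInOrder {V : Type*} {k : ℕ} (l : List V) (s : Fin k → V) : Prop :=
  ∃ r, List.Sublist (List.ofFn s) (l.rotate r)

/-!
If `G - {z₁, z₂, a}` is not strongly connected, its vertices split into nonempty `X`, `Y` with no
edge from `X` to `Y`. For `x ∈ X`, `y ∈ Y` this caps `d⁺(x) + d⁻(y)` at `|G| + 1`, so the cut is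
tight: `x` sends edges to all of `X - x` and `{z₁, z₂, a}`, and `y` receives edges from all of
`Y - y` and `{z₁, z₂, a}`. As `z₁z₂` is not an edge, `z₁` and `z₂` have two common neighbours
`a₁ ≠ a₂`. If both admitted such cuts, with `a₂ ∈ X₁` after possibly reversing all edges, then
tightness forces `X₁ - a₂ ⊆ Y₂ ⊆ X₁ - a₂ + a₁` and `Y₁ ⊆ X₂`, and the condition
`d⁺ + d⁻ ≥ |G| + 3` at a vertex of `X₁ ∩ Y₂` and at one of `Y₁ ∩ X₂` gives the incompatible
bounds `|X₁| ≥ |Y₁| + 2` and `|Y₁| ≥ |X₁| + 1`.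
-/

open Finset

instance instDecidableRelFlip {V : Type*} (A : V → V → Prop) [DecidableRel A] :
    DecidableRel (flip A) :=
  fun a b => inferInstanceAs (Decidable (A b a))

section Neighbours

variable {V : Type*} [Fintype V] (A : V → V → Prop) [DecidableRel A]

def outNbrs (x : V) : Finset V := univ.filter (A x ·)

def inNbrs (x : V) : Finset V := univ.filter (A · x)

variable {A}

@[simp]
theorem mem_outNbrs {x w : V} : w ∈ outNbrs A x ↔ A x w := by simp [outNbrs]

@[simp]
theorem mem_inNbrs {x w : V} : w ∈ inNbrs A x ↔ A w x := by simp [inNbrs]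

theorem card_outNbrs_lt (hirr : ∀ x, ¬ A x x) (x : V) : #(outNbrs A x) < Fintype.card V :=
  card_lt_univ_of_notMem (s := outNbrs A x) (x := x) (by simpa using hirr x)

theorem one_lt_card_outNbrs_inter_inNbrs [DecidableEq V] (hirr : ∀ x, ¬ A x x) {z₁ z₂ : V}
    (hzz : ¬ A z₁ z₂) (hdeg : Fintype.card V + 1 ≤ #(outNbrs A z₁) + #(inNbrs A z₂)) :
    1 < #(outNbrs A z₁ ∩ inNbrs A z₂) := by
  have hunion : #(outNbrs A z₁ ∪ inNbrs A z₂) < Fintype.card V :=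
    card_lt_univ_of_notMem (x := z₁) (by simpa using ⟨hirr z₁, hzz⟩)
  have := card_union_add_card_inter (outNbrs A z₁) (inNbrs A z₂)
  omega

end Neighbours

section Cut

variable {V : Type*} [Fintype V] [DecidableEq V] {A : V → V → Prop} {T X Y : Finset V} {x y w : V}

variable (A) in
structure IsCut (T X Y : Finset V) : Prop where
  nonempty_left : X.Nonempty
  nonempty_right : Y.Nonempty
  disjoint : Disjoint X Y
  union_eq : X ∪ Y = Tᶜ
  not_adj : ∀ x ∈ X, ∀ y ∈ Y, ¬ A x y

theorem IsCut.flip (h : IsCut A T X Y) : IsCut (flip A) T Y X :=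
  ⟨h.nonempty_right, h.nonempty_left, h.disjoint.symm, by rw [union_comm, h.union_eq],
    fun y hy x hx => h.not_adj x hx y hy⟩

theorem IsCut.notMem_of_mem_left (h : IsCut A T X Y) (hx : x ∈ X) : x ∉ T :=
  mem_compl.mp (h.union_eq ▸ mem_union_left Y hx)

theorem IsCut.notMem_of_mem_right (h : IsCut A T X Y) (hy : y ∈ Y) : y ∉ T :=
  h.flip.notMem_of_mem_left hy

theorem IsCut.mem_or_mem (h : IsCut A T X Y) (hw : w ∉ T) : w ∈ X ∨ w ∈ Y :=
  mem_union.mp (h.union_eq ▸ mem_compl.mpr hw)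

theorem IsCut.card_add_card_add_card (h : IsCut A T X Y) : #X + #Y + #T = Fintype.card V := by
  have := card_union_of_disjoint h.disjoint
  rw [h.union_eq, card_compl] at this
  have := card_le_univ T
  omega

theorem IsCut.card_erase_union (h : IsCut A T X Y) (hx : x ∈ X) :
    #(X.erase x ∪ T) + 1 = #X + #T := by
  have hdisj : Disjoint (X.erase x) T :=
    disjoint_left.mpr fun w hw => h.notMem_of_mem_left (mem_of_mem_erase hw)
  rw [card_union_of_disjoint hdisj, card_erase_of_mem hx]
  have := card_pos.mpr ⟨x, hx⟩
  omega

variable [DecidableRel A]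

theorem IsCut.outNbrs_subset (h : IsCut A T X Y) (hirr : ∀ x, ¬ A x x) (hx : x ∈ X) :
    outNbrs A x ⊆ X.erase x ∪ T := by
  intro w hw
  rw [mem_outNbrs] at hw
  by_cases hwT : w ∈ T
  · exact mem_union_right _ hwT
  · refine mem_union_left _ (mem_erase.mpr ⟨fun hwx => hirr x (hwx ▸ hw), ?_⟩)
    exact (h.mem_or_mem hwT).resolve_right fun hwY => h.not_adj x hx w hwY hw

theorem IsCut.inNbrs_subset (h : IsCut A T X Y) (hirr : ∀ x, ¬ A x x) (hy : y ∈ Y) :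
    inNbrs A y ⊆ Y.erase y ∪ T :=
  h.flip.outNbrs_subset hirr hy

theorem IsCut.card_outNbrs_add_card_inNbrs_le (h : IsCut A T X Y) (hirr : ∀ x, ¬ A x x)
    (hx : x ∈ X) (hy : y ∈ Y) :
    #(outNbrs A x) + #(inNbrs A y) + 2 ≤ Fintype.card V + #T := by
  have hout := card_le_card (h.outNbrs_subset hirr hx)
  have hin := card_le_card (h.inNbrs_subset hirr hy)
  have := h.card_erase_union hx
  have := h.flip.card_erase_union hy
  have := h.card_add_card_add_card
  omega

end Cut

section Tight

variable {V : Type*} [Fintype V] [DecidableEq V] {A : V → V → Prop} [DecidableRel A]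
  {T X Y : Finset V} {x y : V}

theorem IsCut.card_eq_three (h : IsCut A T X Y) (hirr : ∀ x, ¬ A x x)
    (hdeg₂ : ∀ x y, Fintype.card V + 1 ≤ #(outNbrs A x) + #(inNbrs A y)) (hT : #T ≤ 3) :
    #T = 3 := by
  obtain ⟨x, hx⟩ := h.nonempty_left
  obtain ⟨y, hy⟩ := h.nonempty_right
  have := h.card_outNbrs_add_card_inNbrs_le hirr hx hy
  have := hdeg₂ x y
  omega

theorem IsCut.outNbrs_eq (h : IsCut A T X Y) (hirr : ∀ x, ¬ A x x)
    (hdeg₂ : ∀ x y, Fintype.card V + 1 ≤ #(outNbrs A x) + #(inNbrs A y)) (hT : #T ≤ 3)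
    (hx : x ∈ X) : outNbrs A x = X.erase x ∪ T := by
  obtain ⟨y, hy⟩ := h.nonempty_right
  refine eq_of_subset_of_card_le (h.outNbrs_subset hirr hx) ?_
  have := card_le_card (h.inNbrs_subset hirr hy)
  have := h.card_erase_union hx
  have := h.flip.card_erase_union hy
  have := h.card_add_card_add_card
  have := h.card_eq_three hirr hdeg₂ hT
  have := hdeg₂ x y
  omega

theorem IsCut.inNbrs_eq (h : IsCut A T X Y) (hirr : ∀ x, ¬ A x x)
    (hdeg₂ : ∀ x y, Fintype.card V + 1 ≤ #(outNbrs A x) + #(inNbrs A y)) (hT : #T ≤ 3)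
    (hy : y ∈ Y) : inNbrs A y = Y.erase y ∪ T :=
  h.flip.outNbrs_eq hirr (fun x y => (hdeg₂ y x).trans_eq (add_comm _ _)) hT hy

theorem IsCut.card_outNbrs (h : IsCut A T X Y) (hirr : ∀ x, ¬ A x x)
    (hdeg₂ : ∀ x y, Fintype.card V + 1 ≤ #(outNbrs A x) + #(inNbrs A y)) (hT : #T ≤ 3)
    (hx : x ∈ X) : #(outNbrs A x) = #X + 2 := by
  have := h.card_erase_union hx
  have := h.card_eq_three hirr hdeg₂ hT
  rw [h.outNbrs_eq hirr hdeg₂ hT hx]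
  omega

theorem IsCut.card_inNbrs (h : IsCut A T X Y) (hirr : ∀ x, ¬ A x x)
    (hdeg₂ : ∀ x y, Fintype.card V + 1 ≤ #(outNbrs A x) + #(inNbrs A y)) (hT : #T ≤ 3)
    (hy : y ∈ Y) : #(inNbrs A y) = #Y + 2 :=
  h.flip.card_outNbrs hirr (fun x y => (hdeg₂ y x).trans_eq (add_comm _ _)) hT hy

theorem IsCut.two_le_card_right (h : IsCut A T X Y) (hirr : ∀ x, ¬ A x x)
    (hdeg₁ : ∀ x, Fintype.card V + 3 ≤ #(outNbrs A x) + #(inNbrs A x))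
    (hdeg₂ : ∀ x y, Fintype.card V + 1 ≤ #(outNbrs A x) + #(inNbrs A y)) (hT : #T ≤ 3) :
    2 ≤ #Y := by
  obtain ⟨y, hy⟩ := h.nonempty_right
  have := hdeg₁ y
  have := card_outNbrs_lt hirr y
  rw [h.card_inNbrs hirr hdeg₂ hT hy] at *
  omega

end Tight

section TwoCuts

variable {V : Type*} [Fintype V] [DecidableEq V] {A : V → V → Prop} [DecidableRel A]
  {S X₁ Y₁ X₂ Y₂ : Finset V} {a₁ a₂ : V}

theorem IsCut.subset_insert_erase_of_mem_left (h₁ : IsCut A (insert a₁ S) X₁ Y₁)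
    (h₂ : IsCut A (insert a₂ S) X₂ Y₂) (hirr : ∀ x, ¬ A x x)
    (hdeg₂ : ∀ x y, Fintype.card V + 1 ≤ #(outNbrs A x) + #(inNbrs A y)) (hS : #S ≤ 2)
    (ha₂ : a₂ ∈ X₁) : Y₂ ⊆ insert a₁ (X₁.erase a₂) := by
  intro y hy
  have hin : a₂ ∈ inNbrs A y := by
    rw [h₂.inNbrs_eq hirr hdeg₂ ((card_insert_le a₂ S).trans (by omega)) hy]
    exact mem_union_right _ (mem_insert_self a₂ S)
  have hadj : y ∈ outNbrs A a₂ := mem_outNbrs.mpr (mem_inNbrs.mp hin)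
  rw [h₁.outNbrs_eq hirr hdeg₂ ((card_insert_le a₁ S).trans (by omega)) ha₂] at hadj
  have hyT := h₂.notMem_of_mem_right hy
  simp only [mem_union, mem_insert, mem_erase] at hadj hyT ⊢
  tauto

theorem IsCut.erase_subset_of_mem_left (h₁ : IsCut A (insert a₁ S) X₁ Y₁)
    (h₂ : IsCut A (insert a₂ S) X₂ Y₂) (hirr : ∀ x, ¬ A x x)
    (hdeg₁ : ∀ x, Fintype.card V + 3 ≤ #(outNbrs A x) + #(inNbrs A x))
    (hdeg₂ : ∀ x y, Fintype.card V + 1 ≤ #(outNbrs A x) + #(inNbrs A y)) (hS : #S ≤ 2)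
    (ha₂ : a₂ ∈ X₁) : X₁.erase a₂ ⊆ Y₂ := by
  obtain ⟨w, hw⟩ : (Y₂.erase a₁).Nonempty := by
    have := h₂.two_le_card_right hirr hdeg₁ hdeg₂ ((card_insert_le a₂ S).trans (by omega))
    have := pred_card_le_card_erase (s := Y₂) (a := a₁)
    exact card_pos.mp (by omega)
  have hwY₂ : w ∈ Y₂ := mem_of_mem_erase hw
  have hwX₁ : w ∈ X₁ := mem_of_mem_erase <| (mem_insert.mp
    (h₁.subset_insert_erase_of_mem_left h₂ hirr hdeg₂ hS ha₂ hwY₂)).resolve_left (ne_of_mem_erase hw)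
  intro t ht
  have htT : t ∉ insert a₂ S := by
    have := h₁.notMem_of_mem_left (mem_of_mem_erase ht)
    simp only [mem_insert] at this ⊢
    exact not_or.mpr ⟨ne_of_mem_erase ht, fun htS => this (.inr htS)⟩
  refine (h₂.mem_or_mem htT).resolve_left fun htX₂ => ?_
  -- `t ∈ X₁` sends an edge to `w ∈ X₁ ∩ Y₂`.
  obtain rfl | htw := eq_or_ne t w
  · exact disjoint_left.mp h₂.disjoint htX₂ hwY₂
  · refine h₂.not_adj t htX₂ w hwY₂ (mem_outNbrs.mp ?_)
    rw [h₁.outNbrs_eq hirr hdeg₂ ((card_insert_le a₁ S).trans (by omega)) (mem_of_mem_erase ht)]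
    exact mem_union_left _ (mem_erase.mpr ⟨htw.symm, hwX₁⟩)

theorem IsCut.right_subset_of_mem_left (h₁ : IsCut A (insert a₁ S) X₁ Y₁)
    (h₂ : IsCut A (insert a₂ S) X₂ Y₂) (hirr : ∀ x, ¬ A x x)
    (hdeg₂ : ∀ x y, Fintype.card V + 1 ≤ #(outNbrs A x) + #(inNbrs A y)) (hS : #S ≤ 2)
    (ha₂ : a₂ ∈ X₁) : Y₁ ⊆ X₂ := by
  intro y hy
  have hyT := h₁.notMem_of_mem_right hy
  have hya₂ : y ≠ a₂ := fun hya => disjoint_left.mp h₁.disjoint ha₂ (hya ▸ hy)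
  have hyX₁ : y ∉ X₁ := fun hyX => disjoint_left.mp h₁.disjoint hyX hy
  have hsub := h₁.subset_insert_erase_of_mem_left h₂ hirr hdeg₂ hS ha₂
  refine (h₂.mem_or_mem ?_).resolve_right fun hyY₂ => ?_
  · simp only [mem_insert] at hyT ⊢
    tauto
  · have := hsub hyY₂
    simp only [mem_insert, mem_erase] at hyT this
    tauto

theorem IsCut.not_isCut_of_mem_left (h₁ : IsCut A (insert a₁ S) X₁ Y₁) (hirr : ∀ x, ¬ A x x)
    (hdeg₁ : ∀ x, Fintype.card V + 3 ≤ #(outNbrs A x) + #(inNbrs A x))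
    (hdeg₂ : ∀ x y, Fintype.card V + 1 ≤ #(outNbrs A x) + #(inNbrs A y)) (hS : #S ≤ 2)
    (ha₂ : a₂ ∈ X₁) : ¬ IsCut A (insert a₂ S) X₂ Y₂ := by
  intro h₂
  have hT₁ : #(insert a₁ S) ≤ 3 := (card_insert_le a₁ S).trans (by omega)
  have hT₂ : #(insert a₂ S) ≤ 3 := (card_insert_le a₂ S).trans (by omega)
  have hX₁ := h₁.erase_subset_of_mem_left h₂ hirr hdeg₁ hdeg₂ hS ha₂
  have hY₂ := card_le_card (h₁.subset_insert_erase_of_mem_left h₂ hirr hdeg₂ hS ha₂)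
  have := card_insert_le a₁ (X₁.erase a₂)
  have := card_le_card hX₁
  have := card_erase_of_mem ha₂
  have := h₂.two_le_card_right hirr hdeg₁ hdeg₂ hT₂
  obtain ⟨w, hw⟩ : (X₁.erase a₂).Nonempty := card_pos.mp (by omega)
  obtain ⟨y, hy⟩ := h₁.nonempty_right
  -- `hdeg₁` at `w ∈ X₁ ∩ Y₂` forces `|X₁| ≥ |Y₁| + 2`, at `y ∈ Y₁ ∩ X₂` it forces `|Y₁| ≥ |X₁| + 1`.
  have hw_deg := hdeg₁ w
  rw [h₁.card_outNbrs hirr hdeg₂ hT₁ (mem_of_mem_erase hw),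
    h₂.card_inNbrs hirr hdeg₂ hT₂ (hX₁ hw)] at hw_deg
  have hy_deg := hdeg₁ y
  rw [h₂.card_outNbrs hirr hdeg₂ hT₂ (h₁.right_subset_of_mem_left h₂ hirr hdeg₂ hS ha₂ hy),
    h₁.card_inNbrs hirr hdeg₂ hT₁ hy] at hy_deg
  have := h₁.card_add_card_add_card
  have := h₂.card_add_card_add_card
  have := h₁.card_eq_three hirr hdeg₂ hT₁
  have := h₂.card_eq_three hirr hdeg₂ hT₂
  omega

theorem IsCut.not_isCut_insert (h₁ : IsCut A (insert a₁ S) X₁ Y₁) (hirr : ∀ x, ¬ A x x)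
    (hdeg₁ : ∀ x, Fintype.card V + 3 ≤ #(outNbrs A x) + #(inNbrs A x))
    (hdeg₂ : ∀ x y, Fintype.card V + 1 ≤ #(outNbrs A x) + #(inNbrs A y)) (hS : #S ≤ 2)
    (ha₂ : a₂ ∉ insert a₁ S) : ¬ IsCut A (insert a₂ S) X₂ Y₂ := by
  intro h₂
  rcases h₁.mem_or_mem ha₂ with ha₂ | ha₂
  · exact h₁.not_isCut_of_mem_left hirr hdeg₁ hdeg₂ hS ha₂ h₂
  · exact h₁.flip.not_isCut_of_mem_left hirr (fun x => (hdeg₁ x).trans_eq (add_comm _ _))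
      (fun x y => (hdeg₂ y x).trans_eq (add_comm _ _)) hS ha₂ h₂.flip

end TwoCuts

theorem reflTransGen_of_forall_not_isCut {V : Type*} [Fintype V] [DecidableEq V]
    {A : V → V → Prop} {T : Finset V} (hT : ∀ X Y, ¬ IsCut A T X Y) {u v : V} (hu : u ∉ T)
    (hv : v ∉ T) : Relation.ReflTransGen (fun b c => b ∉ T ∧ c ∉ T ∧ A b c) u v := by
  classical
  by_contra huv
  let R := Relation.ReflTransGen (fun b c => b ∉ T ∧ c ∉ T ∧ A b c) u
  refine hT (Tᶜ.filter R) (Tᶜ.filter (¬ R ·)) ⟨⟨u, by simpa [R, hu] using .refl⟩,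
    ⟨v, by simpa [R, hv] using huv⟩, disjoint_filter_filter_not _ _ _,
    filter_union_filter_not_eq R _, ?_⟩
  intro x hx y hy hxy
  simp only [mem_filter, mem_compl] at hx hy
  exact hy.2 (hx.2.tail ⟨hx.1, hy.1, hxy⟩)

theorem exists_good_common_neighbour_strong_connectivity_general
    {V : Type*} [Fintype V] [DecidableEq V]
    (A : V → V → Prop) [DecidableRel A] (hirr : Irreflexive A)
    (hdeg1 : ∀ x : V, Fintype.card V + 3 ≤
      (Finset.univ.filter fun w => A x w).card + (Finset.univ.filter fun w => A w x).card)
    (hdeg2 : ∀ x y : V, Fintype.card V + 1 ≤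
      (Finset.univ.filter fun w => A x w).card + (Finset.univ.filter fun w => A w y).card)
    (z₁ z₂ : V) (hzz : ¬ A z₁ z₂) :
    ∃ a : V, A z₁ a ∧ A a z₂ ∧
      ∀ u v : V, u ∉ ({z₁, z₂, a} : Set V) → v ∉ ({z₁, z₂, a} : Set V) →
        Relation.ReflTransGen
          (fun b c => b ∉ ({z₁, z₂, a} : Set V) ∧ c ∉ ({z₁, z₂, a} : Set V) ∧ A b c) u v := by
  obtain ⟨a₁, ha₁, a₂, ha₂, hne⟩ :=
    one_lt_card.mp (one_lt_card_outNbrs_inter_inNbrs hirr hzz (hdeg2 z₁ z₂))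
  simp only [mem_inter, mem_outNbrs, mem_inNbrs] at ha₁ ha₂
  obtain ⟨a, ha, hcut⟩ :
      ∃ a, (A z₁ a ∧ A a z₂) ∧ ∀ X Y, ¬ IsCut A (insert a {z₁, z₂} : Finset V) X Y := by
    by_cases h₁ : ∃ X Y, IsCut A (insert a₁ {z₁, z₂}) X Y
    · obtain ⟨X₁, Y₁, h₁⟩ := h₁
      have ha₂T : a₂ ∉ (insert a₁ {z₁, z₂} : Finset V) := by
        simp only [mem_insert, mem_singleton, not_or]
        exact ⟨hne.symm, fun h => hirr _ (h ▸ ha₂.1), fun h => hirr _ (h ▸ ha₂.2)⟩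
      exact ⟨a₂, ha₂, fun X₂ Y₂ => h₁.not_isCut_insert hirr hdeg1 hdeg2 card_le_two ha₂T⟩
    · push Not at h₁
      exact ⟨a₁, ha₁, h₁⟩
  refine ⟨a, ha.1, ha.2, fun u v hu hv => ?_⟩
  have hT : ({z₁, z₂, a} : Set V) = ↑(insert a {z₁, z₂} : Finset V) := by
    ext
    simp only [Set.mem_insert_iff, Set.mem_singleton_iff, coe_insert, coe_singleton]
    tauto
  rw [hT] at hu hv ⊢
  exact reflTransGen_of_forall_not_isCut hcut hu hv

/-- Lemma (strongconn): under the stated degree conditions, for non-adjacent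
$z_1 \ne z_2$ there is $a \in N^+(z_1) \cap N^-(z_2)$ with $G - \{z_1,z_2,a\}$
strongly connected. -/
theorem exists_good_common_neighbour_strong_connectivity
    {V : Type*} [Fintype V] [DecidableEq V]
    (A : V → V → Prop) [DecidableRel A] (hirr : Irreflexive A)
    (hdeg1 : ∀ x : V, Fintype.card V + 3 ≤
      (Finset.univ.filter fun w => A x w).card + (Finset.univ.filter fun w => A w x).card)
    (hdeg2 : ∀ x y : V, Fintype.card V + 1 ≤
      (Finset.univ.filter fun w => A x w).card + (Finset.univ.filter fun w => A w y).card)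
    (z₁ z₂ : V) (hz : z₁ ≠ z₂) (hzz : ¬ A z₁ z₂) :
    ∃ a : V, A z₁ a ∧ A a z₂ ∧
      ∀ u v : V, u ∉ ({z₁, z₂, a} : Set V) → v ∉ ({z₁, z₂, a} : Set V) →
        Relation.ReflTransGen
          (fun b c => b ∉ ({z₁, z₂, a} : Set V) ∧ c ∉ ({z₁, z₂, a} : Set V) ∧ A b c) u v :=
  exists_good_common_neighbour_strong_connectivity_general A hirr hdeg1 hdeg2 z₁ z₂ hzz
end

section
/- Let D be a digraph on n vertices with minimum semi-degree δ⁰(D) ≥ ⌈(n+k)/2⌉ - 1, where k ≥ 3. Let C be a longest cycle in D encountering a fixed sequence S = (s_1,…,s_k) of distinct vertices in this order, and assume C is not Hamiltonian. Let H be the subdigraph induced by the vertices outside C. Then for any two vertices x, y of H such that H contains a directed x–y path, d^-_H(x) + d^+_H(y) ≥ |H| + k - 2, where d^-_H(x) counts in-neighbours of x inside V(H) and d^+_H(y) counts out-neighbours of y inside V(H). -/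
theorem Cycle.chain_coe_iff {α : Type*} {r : α → α → Prop} {l : List α} :
    Cycle.Chain r (l : Cycle α) ↔ l.IsChain r ∧ ∀ a ∈ l.getLast?, ∀ b ∈ l.head?, r a b := by
  rcases eq_or_ne l [] with rfl | hl
  · simp
  rw [Cycle.chain_ne_nil r hl, List.isChain_cons, List.getLast?_eq_some_getLast hl, and_comm]
  simp

namespace List

variable {α : Type*}

theorem getLast?_rotate_succ (l : List α) (i : Fin l.length) :
    (l.rotate (i + 1)).getLast? = some l[i] := by
  rw [rotate_eq_drop_append_take i.isLt, getLast?_append, getLast?_take]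
  simp

theorem head?_rotate_succ (l : List α) (i : Fin l.length) :
    (l.rotate (i + 1)).head? = some (l.get (finRotate _ i)) := by
  have := i.neZero
  rw [← rotate_mod, head?_rotate (Nat.mod_lt _ (Nat.pos_of_neZero _)), finRotate_apply]
  simp [Fin.val_add]

theorem rotate_sublist_rotate_append (l p : List α) (r : ℕ) :
    ∃ m, l.rotate r <+ (l ++ p).rotate m := by
  rcases eq_or_ne l [] with rfl | hl
  · exact ⟨0, by simp⟩
  have hr : r % l.length ≤ l.length := (Nat.mod_lt _ (length_pos_iff.mpr hl)).le
  refine ⟨r % l.length, ?_⟩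
  rw [← rotate_mod, rotate_eq_drop_append_take hr,
    rotate_eq_drop_append_take (hr.trans (by simp)), drop_append_of_le_length hr,
    take_append_of_le_length hr, append_assoc]
  exact (sublist_append_right p _).append_left _

end List

open Finset

section Digraph

variable {V : Type*} {A : V → V → Prop}

theorem isCycleList_iff {l : List V} :
    IsCycleList A l ↔ 2 ≤ l.length ∧ l.Nodup ∧ Cycle.Chain A (l : Cycle V) := by
  rw [Cycle.chain_coe_iff]
  rfl

theorem IsCycleList.rotate {l : List V} (h : IsCycleList A l) (n : ℕ) :
    IsCycleList A (l.rotate n) := by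
  obtain ⟨hlen, hnd, hch⟩ := isCycleList_iff.mp h
  rw [isCycleList_iff, ← Cycle.coe_eq_coe.mpr ⟨n, rfl⟩]
  exact ⟨by simpa using hlen, List.nodup_rotate.mpr hnd, hch⟩

theorem IsCycleList.append {C p : List V} {v w x y : V} (hC : IsCycleList A C)
    (hv : C.getLast? = some v) (hw : C.head? = some w)
    (hp : p.Nodup) (hpA : p.IsChain A) (hx : p.head? = some x) (hy : p.getLast? = some y)
    (hdisj : ∀ u ∈ p, u ∉ C) (hvx : A v x) (hyw : A y w) : IsCycleList A (C ++ p) := by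
  obtain ⟨hlen, hnd, hch, -⟩ := hC
  have hC0 : C ≠ [] := List.ne_nil_of_length_pos (by omega)
  refine ⟨by simp; omega, List.nodup_append.mpr ⟨hnd, hp, ?_⟩,
    List.isChain_append.mpr ⟨hch, hpA, ?_⟩, ?_⟩
  · rintro a ha b hb rfl
    exact hdisj a hb ha
  · simp_all
  · simp_all [List.head?_append_of_ne_nil _ hC0]

theorem EncountersInOrder.of_isRotated {k : ℕ} {s : Fin k → V} {l l' : List V}
    (h : EncountersInOrder l s) (hl : l ~r l') : EncountersInOrder l' s := by
  obtain ⟨r, hr⟩ := h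
  obtain ⟨m, hm⟩ := hl.symm.trans ⟨r, rfl⟩
  exact ⟨m, hm ▸ hr⟩

theorem EncountersInOrder.append {k : ℕ} {s : Fin k → V} {l : List V}
    (h : EncountersInOrder l s) (p : List V) : EncountersInOrder (l ++ p) s := by
  obtain ⟨r, hr⟩ := h
  obtain ⟨m, hm⟩ := l.rotate_sublist_rotate_append p r
  exact ⟨m, hr.trans hm⟩

theorem IsCycleList.exists_longer_of_splice {k : ℕ} {s : Fin k → V} {C p : List V} {x y : V}
    (hC : IsCycleList A C) (hCs : EncountersInOrder C s)
    (hp : p.Nodup) (hpA : p.IsChain A) (hx : p.head? = some x) (hy : p.getLast? = some y)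
    (hdisj : ∀ u ∈ p, u ∉ C) (i : Fin C.length)
    (hix : A (C.get i) x) (hyi : A y (C.get (finRotate _ i))) :
    ∃ C', IsCycleList A C' ∧ EncountersInOrder C' s ∧ C.length < C'.length := by
  -- rotating by `i + 1` makes `C[i]` the last vertex and its successor the first one
  refine ⟨C.rotate (i + 1) ++ p,
    (hC.rotate _).append (C.getLast?_rotate_succ i) (C.head?_rotate_succ i) hp hpA hx hy
      (fun u hu => by simpa using hdisj u hu) hix hyi,
    (hCs.of_isRotated ⟨_, rfl⟩).append p, ?_⟩
  have : p ≠ [] := by rintro rfl; simp at hx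
  simpa using List.length_pos_iff.mpr this

variable [Fintype V] [DecidableEq V]

theorem card_filter_mem_and_eq_card_filter_get {l : List V} (hl : l.Nodup) (P : V → Prop)
    [DecidablePred P] :
    #{v | v ∈ l ∧ P v} = #{i : Fin l.length | P (l.get i)} := by
  symm
  refine card_bij (fun i _ => l.get i) (by simp) (fun i _ j _ h => ?_) ?_
  · exact List.nodup_iff_injective_get.mp hl h
  · simp only [mem_filter, mem_univ, true_and, List.mem_iff_get]
    rintro _ ⟨⟨i, rfl⟩, hi⟩
    exact ⟨i, hi, rfl⟩

theorem card_filter_mem_and_add_card_filter_mem_and_le {l : List V} (hl : l.Nodup)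
    (P Q : V → Prop) [DecidablePred P] [DecidablePred Q]
    (h : ∀ i : Fin l.length, ¬ (P (l.get i) ∧ Q (l.get (finRotate _ i)))) :
    #{v | v ∈ l ∧ P v} + #{v | v ∈ l ∧ Q v} ≤ l.length := by
  have hQ : #{i : Fin l.length | Q (l.get i)} = #{i | Q (l.get (finRotate _ i))} :=
    (card_equiv (finRotate _) (by simp)).symm
  rw [card_filter_mem_and_eq_card_filter_get hl, card_filter_mem_and_eq_card_filter_get hl, hQ,
    ← card_union_of_disjoint (disjoint_filter.mpr fun i _ hP hQ => h i ⟨hP, hQ⟩)]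
  exact (card_le_univ _).trans (by simp)

end Digraph

theorem degree_sum_in_H_of_path_general
    {V : Type*} [Fintype V] [DecidableEq V]
    (A : V → V → Prop) [DecidableRel A]
    (n k : ℕ) (hn : n = Fintype.card V)
    (hdeg : ∀ v : V, (n + k + 1) / 2 - 1 ≤ (Finset.univ.filter fun w => A v w).card ∧
                     (n + k + 1) / 2 - 1 ≤ (Finset.univ.filter fun w => A w v).card)
    (s : Fin k → V)
    (C : List V) (hC : IsCycleList A C) (hCs : EncountersInOrder C s)
    (hmax : ∀ C' : List V, IsCycleList A C' → EncountersInOrder C' s → C'.length ≤ C.length) :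
    ∀ x y : V, x ∉ C → y ∉ C →
      (∃ p : List V, p.Nodup ∧ p.Chain' A ∧ p.head? = some x ∧
        p.getLast? = some y ∧ ∀ v ∈ p, v ∉ C) →
      (Finset.univ.filter fun v => (v ∉ C : Prop)).card + k - 2 ≤
        (Finset.univ.filter fun v => v ∉ C ∧ A v x).card +
        (Finset.univ.filter fun v => v ∉ C ∧ A y v).card := by
  rintro x y - - ⟨p, hp, hpA, hpx, hpy, hpC⟩
  have hdegC : #{v | v ∈ C ∧ A v x} + #{v | v ∈ C ∧ A y v} ≤ C.length :=
    card_filter_mem_and_add_card_filter_mem_and_le hC.2.1 _ _ fun i ⟨hix, hyi⟩ => by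
      obtain ⟨C', hC', hC's, hlt⟩ := hC.exists_longer_of_splice hCs hp hpA hpx hpy hpC i hix hyi
      exact (hmax C' hC' hC's).not_gt hlt
  have hsplit (P : V → Prop) [DecidablePred P] :
      #{v | P v} = #{v | v ∈ C ∧ P v} + #{v | v ∉ C ∧ P v} := by
    rw [← card_filter_add_card_filter_not (s := {v | P v}) (· ∈ C)]
    simp only [filter_filter, and_comm]
  have hcardH : #{v | v ∉ C} + C.length = n := by
    have hCfin : ({v | v ∈ C} : Finset V) = C.toFinset := by ext; simp
    rw [hn, ← card_univ, ← card_filter_add_card_filter_not (s := univ) (· ∈ C), hCfin,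
      List.toFinset_card_of_nodup hC.2.1, add_comm]
  have hdx := (hdeg x).2
  have hdy := (hdeg y).1
  rw [hsplit] at hdx hdy
  omega

/-- If $H$ contains an $x$–$y$ path then $d^-_H(x)+d^+_H(y) \ge |H|+k-2$. -/
theorem degree_sum_in_H_of_path
    {V : Type*} [Fintype V] [DecidableEq V]
    (A : V → V → Prop) [DecidableRel A] (hirr : Irreflexive A)
    (n k : ℕ) (hn : n = Fintype.card V) (hk : 3 ≤ k)
    (hdeg : ∀ v : V, (n + k + 1) / 2 - 1 ≤ (Finset.univ.filter fun w => A v w).card ∧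
                     (n + k + 1) / 2 - 1 ≤ (Finset.univ.filter fun w => A w v).card)
    (s : Fin k → V) (hs : Function.Injective s)
    (C : List V) (hC : IsCycleList A C) (hCs : EncountersInOrder C s)
    (hmax : ∀ C' : List V, IsCycleList A C' → EncountersInOrder C' s → C'.length ≤ C.length)
    (hnotHam : ∃ v : V, v ∉ C) :
    ∀ x y : V, x ∉ C → y ∉ C →
      (∃ p : List V, p.Nodup ∧ p.Chain' A ∧ p.head? = some x ∧
        p.getLast? = some y ∧ ∀ v ∈ p, v ∉ C) →
      (Finset.univ.filter fun v => (v ∉ C : Prop)).card + k - 2 ≤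
        (Finset.univ.filter fun v => v ∉ C ∧ A v x).card +
        (Finset.univ.filter fun v => v ∉ C ∧ A y v).card :=
  degree_sum_in_H_of_path_general A n k hn hdeg s C hC hCs hmax
end

section
/- Under the setup of a longest S-cycle C (with δ⁰(D) ≥ ⌈(n+k)/2⌉ - 1, k ≥ 3, C not Hamiltonian, H the induced digraph outside C), one has |C| ≥ ⌈(n+k)/2⌉ and hence |H| ≤ ⌊(n-k)/2⌋. -/
/-!
Splicing a path of `H` from an out-neighbour of `t ∈ C` to an in-neighbour of the successor `t⁺`
into `C` between `t` and `t⁺` would give a longer cycle still meeting `S` in order. Hence, when `w`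
reaches `z` in `H`, the successor map sends the in-neighbours of `w` on `C` injectively to
vertices of `C` that are not out-neighbours of `z`; with the degree condition this bounds from
below the numbers of vertices of `H` reaching `w` and reached from `z`. As `2δ⁰ + 2 > n`, this
forces `H` to be strongly connected. Then, if some `t ∈ C` sends an edge into `H`, all
in-neighbours of `t⁺` lie on `C`; otherwise all out-neighbours of any vertex of `C` do. Either way
`δ⁰ < |C|`.
-/

theorem List.Sublist.exists_rotate_sublist_rotate {α : Type*} {l₁ l₂ : List α}
    (h : l₁.Sublist l₂) (n : ℕ) : ∃ m, (l₁.rotate n).Sublist (l₂.rotate m) := by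
  rw [List.rotate_eq_drop_append_take_mod]
  rw [← List.take_append_drop (n % l₁.length) l₁] at h
  obtain ⟨r₁, r₂, rfl, h₁, h₂⟩ := List.append_sublist_iff.1 h
  exact ⟨r₁.length, by rw [List.rotate_append_length_eq]; exact h₂.append h₁⟩

theorem List.exists_nodup_isChain_cons_of_relationReflTransGen {α : Type*} {r : α → α → Prop}
    {a b : α} (h : Relation.ReflTransGen r a b) :
    ∃ l, (a :: l).Nodup ∧ (a :: l).IsChain r ∧ (a :: l).getLast? = some b := by
  classical
  induction h using Relation.ReflTransGen.head_induction_on with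
  | refl => exact ⟨[], nodup_singleton b, isChain_singleton b, rfl⟩
  | @head a c hac _ ih =>
    obtain ⟨l, hnd, hch, hlast⟩ := ih
    by_cases ha : a ∈ c :: l
    · obtain ⟨l₁, l₂, hl⟩ := append_of_mem ha
      rw [hl] at hnd hch hlast
      refine ⟨l₂, hnd.sublist (sublist_append_right _ _), hch.suffix (suffix_append _ _), ?_⟩
      rwa [getLast?_append_of_ne_nil _ (cons_ne_nil _ _)] at hlast
    · refine ⟨c :: l, nodup_cons.2 ⟨ha, hnd⟩, hch.cons_cons hac, ?_⟩
      rwa [getLast?_cons_cons]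

namespace IsCycleList

variable {V : Type*} {A : V → V → Prop}

theorem iff_cycleChain {l : List V} :
    IsCycleList A l ↔ 2 ≤ l.length ∧ l.Nodup ∧ Cycle.Chain A (l : Cycle V) := by
  cases l with
  | nil => simp [IsCycleList]
  | cons a l =>
    change _ ∧ _ ∧ List.IsChain A (a :: l) ∧ _ ↔ _
    simp only [Cycle.chain_coe_cons, ← List.cons_append,
      List.isChain_append (l₁ := a :: l), List.head?_cons, Option.mem_some_iff,
      List.isChain_singleton, true_and]

theorem isRotated {l l' : List V} (hl : IsCycleList A l) (h : l ~r l') : IsCycleList A l' := by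
  rw [iff_cycleChain] at hl ⊢
  obtain ⟨h2, hnd, hch⟩ := hl
  exact ⟨h.perm.length_eq ▸ h2, h.nodup_iff.1 hnd, Cycle.coe_eq_coe.2 h ▸ hch⟩

theorem insert_path {t u x y : V} {L P : List V} (hC : IsCycleList A (t :: u :: L))
    (hPnd : (x :: P).Nodup) (hPch : (x :: P).IsChain A) (hPlast : (x :: P).getLast? = some y)
    (hPC : ∀ v ∈ x :: P, v ∉ t :: u :: L) (htx : A t x) (hyu : A y u) :
    IsCycleList A (t :: (x :: P ++ u :: L)) := by
  rw [iff_cycleChain] at hC ⊢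
  obtain ⟨-, hnd, hch⟩ := hC
  refine ⟨by simp, ?_, ?_⟩
  · have hnd' := List.nodup_cons.1 hnd
    refine List.nodup_cons.2 ⟨?_, hPnd.append hnd'.2 fun v hv hv' => hPC v hv (.tail _ hv')⟩
    simp only [List.mem_append, not_or]
    exact ⟨fun h => hPC t h (.head _), hnd'.1⟩
  · rw [Cycle.chain_coe_cons] at hch ⊢
    simp only [List.cons_append, List.isChain_cons_cons, List.append_assoc] at hch ⊢
    refine ⟨htx, List.IsChain.append hPch hch.2 ?_⟩
    simp [hPlast, hyu]

end IsCycleList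

namespace EncountersInOrder

variable {V : Type*} {k : ℕ} {s : Fin k → V} {l l' : List V}

theorem isRotated (hl : EncountersInOrder l s) (h : l ~r l') : EncountersInOrder l' s := by
  obtain ⟨r, hr⟩ := hl
  obtain ⟨m, rfl⟩ := h.symm
  exact ⟨m + r, by rwa [← List.rotate_rotate]⟩

theorem mono (hl : EncountersInOrder l s) (h : l.Sublist l') : EncountersInOrder l' s := by
  obtain ⟨r, hr⟩ := hl
  obtain ⟨m, hm⟩ := h.exists_rotate_sublist_rotate r
  exact ⟨m, hr.trans hm⟩

end EncountersInOrder

section Successor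

variable {V : Type*} [DecidableEq V] {C : List V} {t : V}

def cycSucc (C : List V) (t : V) : V :=
  if h : t ∈ C then C.next t h else t

theorem cycSucc_mem (ht : t ∈ C) : cycSucc C t ∈ C := by
  rw [cycSucc, dif_pos ht]
  exact List.next_mem _ _ ht

theorem cycSucc_injOn (hnd : C.Nodup) : Set.InjOn (cycSucc C) {t | t ∈ C} := by
  intro t (ht : t ∈ C) t' (ht' : t' ∈ C) h
  simp only [cycSucc, dif_pos ht, dif_pos ht'] at h
  rw [← C.prev_next hnd t ht, ← C.prev_next hnd t' ht']
  simp only [h]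

theorem exists_isRotated_cons_cycSucc (h2 : 2 ≤ C.length) (hnd : C.Nodup) (ht : t ∈ C) :
    ∃ L, C ~r t :: cycSucc C t :: L := by
  obtain ⟨l₁, l₂, rfl⟩ := List.append_of_mem ht
  have hrot : l₁ ++ t :: l₂ ~r t :: (l₂ ++ l₁) := List.isRotated_append
  obtain ⟨u, L, hL⟩ : ∃ u L, l₂ ++ l₁ = u :: L := by
    refine List.exists_cons_of_ne_nil fun h => ?_
    have := congrArg List.length h
    simp only [List.length_append, List.length_cons, List.length_nil] at this h2
    omega
  rw [hL] at hrot
  refine ⟨L, ?_⟩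
  rwa [cycSucc, dif_pos ht, List.isRotated_next_eq hrot hnd, List.next_cons_cons_eq]

end Successor

section Reach

variable {V : Type*} {A : V → V → Prop} {C : List V}

def ReachAvoiding (A : V → V → Prop) (C : List V) : V → V → Prop :=
  Relation.ReflTransGen fun a b => a ∉ C ∧ b ∉ C ∧ A a b

theorem ReachAvoiding.exists_path {x y : V} (h : ReachAvoiding A C x y) (hx : x ∉ C) :
    ∃ P, (x :: P).Nodup ∧ (x :: P).IsChain A ∧ (x :: P).getLast? = some y ∧
      ∀ v ∈ x :: P, v ∉ C := by
  obtain ⟨P, hnd, hch, hlast⟩ := List.exists_nodup_isChain_cons_of_relationReflTransGen h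
  exact ⟨P, hnd, hch.imp fun _ _ hab => hab.2.2, hlast,
    hch.induction _ _ (fun _ _ hab _ => hab.2.1) fun _ => hx⟩

def IsLongestSCycle {k : ℕ} (A : V → V → Prop) (s : Fin k → V) (C : List V) : Prop :=
  IsCycleList A C ∧ EncountersInOrder C s ∧
    ∀ C', IsCycleList A C' → EncountersInOrder C' s → C'.length ≤ C.length

variable [Fintype V]

def SemidegreeAtLeast (A : V → V → Prop) [DecidableRel A] (d : ℕ) : Prop :=
  ∀ v : V, d ≤ (Finset.univ.filter fun w => A v w).card ∧
    d ≤ (Finset.univ.filter fun w => A w v).card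

open Classical in
noncomputable def avoidingAncestors (A : V → V → Prop) (C : List V) (w : V) : Finset V :=
  Finset.univ.filter fun u => u ∉ C ∧ ReachAvoiding A C u w

open Classical in
noncomputable def avoidingDescendants (A : V → V → Prop) (C : List V) (w : V) : Finset V :=
  Finset.univ.filter fun u => u ∉ C ∧ ReachAvoiding A C w u

theorem mem_avoidingAncestors {u w : V} :
    u ∈ avoidingAncestors A C w ↔ u ∉ C ∧ ReachAvoiding A C u w := by
  simp [avoidingAncestors]

theorem mem_avoidingDescendants {u w : V} :
    u ∈ avoidingDescendants A C w ↔ u ∉ C ∧ ReachAvoiding A C w u := by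
  simp [avoidingDescendants]

theorem card_avoidingAncestors_add_card_avoidingDescendants_le [DecidableEq V] {a b : V}
    (h : ¬ReachAvoiding A C b a) :
    (avoidingAncestors A C a).card + (avoidingDescendants A C b).card ≤
      (Finset.univ.filter fun v => v ∉ C).card := by
  rw [← Finset.card_union_of_disjoint]
  · refine Finset.card_le_card fun u hu => Finset.mem_filter.2 ⟨Finset.mem_univ u, ?_⟩
    rcases Finset.mem_union.1 hu with hu | hu
    exacts [(mem_avoidingAncestors.1 hu).1, (mem_avoidingDescendants.1 hu).1]
  · refine Finset.disjoint_left.2 fun u hua hub => h ?_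
    exact (mem_avoidingDescendants.1 hub).2.trans (mem_avoidingAncestors.1 hua).2

end Reach

section Counting

variable {V : Type*} [DecidableEq V] {A : V → V → Prop} {C : List V} {k : ℕ} {s : Fin k → V}

theorem IsLongestSCycle.not_detour (hC : IsLongestSCycle A s C)
    {t x y : V} (ht : t ∈ C) (hx : x ∉ C) (htx : A t x) (hxy : ReachAvoiding A C x y)
    (hyu : A y (cycSucc C t)) : False := by
  obtain ⟨hcyc, henc, hmax⟩ := hC
  obtain ⟨L, hrot⟩ := exists_isRotated_cons_cycSucc hcyc.1 hcyc.2.1 ht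
  obtain ⟨P, hPnd, hPch, hPlast, hPC⟩ := hxy.exists_path hx
  have hlong := hmax _ ((hcyc.isRotated hrot).insert_path hPnd hPch hPlast
      (fun v hv hvC => hPC v hv (hrot.perm.mem_iff.2 hvC)) htx hyu)
    ((henc.isRotated hrot).mono (((List.sublist_append_right _ _).cons_cons _)))
  have hlen := hrot.perm.length_eq
  simp only [List.length_cons, List.length_append] at hlong hlen
  omega

variable [DecidableRel A]

theorem IsLongestSCycle.card_filter_add_card_filter_le (hC : IsLongestSCycle A s C) {w z : V}
    (hw : w ∉ C) (hwz : ReachAvoiding A C w z) :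
    (C.toFinset.filter (A · w)).card + (C.toFinset.filter (A z ·)).card ≤ C.length := by
  have hle : (C.toFinset.filter (A · w)).card ≤ (C.toFinset \ C.toFinset.filter (A z ·)).card := by
    refine Finset.card_le_card_of_injOn (cycSucc C) (fun t ht => ?_) fun t ht t' ht' =>
      cycSucc_injOn hC.1.2.1 (List.mem_toFinset.1 (Finset.mem_filter.1 ht).1)
        (List.mem_toFinset.1 (Finset.mem_filter.1 ht').1)
    rw [Finset.mem_coe, Finset.mem_filter, List.mem_toFinset] at ht
    rw [Finset.mem_coe, Finset.mem_sdiff, Finset.mem_filter, List.mem_toFinset]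
    exact ⟨cycSucc_mem ht.1, fun hu => hC.not_detour ht.1 hw ht.2 hwz hu.2⟩
  rw [Finset.card_sdiff_of_subset (Finset.filter_subset _ _),
    List.toFinset_card_of_nodup hC.1.2.1] at hle
  have := Finset.card_le_card (Finset.filter_subset (A z ·) C.toFinset)
  rw [List.toFinset_card_of_nodup hC.1.2.1] at this
  omega

variable [Fintype V]

theorem card_filter_add_one_le {R : V → V → Prop} [DecidableRel R] {w : V} (hw : ¬R w w)
    {B : Finset V} (hwB : w ∈ B) (hB : ∀ a, R w a → a ∉ C → a ∈ B) :
    (Finset.univ.filter (R w)).card + 1 ≤ (C.toFinset.filter (R w)).card + B.card := by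
  have hsub : Finset.univ.filter (R w) ⊆ C.toFinset.filter (R w) ∪ B.erase w := by
    intro a ha
    rw [Finset.mem_filter] at ha
    by_cases haC : a ∈ C
    · exact Finset.mem_union_left _ (Finset.mem_filter.2 ⟨List.mem_toFinset.2 haC, ha.2⟩)
    · exact Finset.mem_union_right _
        (Finset.mem_erase.2 ⟨fun h => hw (h ▸ ha.2), hB a ha.2 haC⟩)
  have := (Finset.card_le_card hsub).trans (Finset.card_union_le _ _)
  rw [Finset.card_erase_of_mem hwB] at this
  have := Finset.card_pos.2 ⟨w, hwB⟩
  omega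

theorem card_filter_lt_length {R : V → V → Prop} [DecidableRel R] {v : V} (hnd : C.Nodup)
    (hv : v ∈ C) (hvv : ¬R v v) (h : ∀ a, R v a → a ∈ C) :
    (Finset.univ.filter (R v)).card < C.length := by
  rw [← List.toFinset_card_of_nodup hnd]
  refine Finset.card_lt_card ⟨fun a ha => List.mem_toFinset.2 (h a (Finset.mem_filter.1 ha).2),
    fun hC => ?_⟩
  exact hvv (Finset.mem_filter.1 (hC (List.mem_toFinset.2 hv))).2

theorem card_filter_notMem_add_length (hnd : C.Nodup) :
    (Finset.univ.filter fun v => v ∉ C).card + C.length = Fintype.card V := by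
  have hcompl : Finset.univ.filter (fun v => v ∉ C) = C.toFinsetᶜ := by ext; simp
  rw [hcompl, Finset.card_compl, ← List.toFinset_card_of_nodup hnd]
  have := C.toFinset.card_le_univ
  omega

theorem IsLongestSCycle.two_mul_add_one_le (hC : IsLongestSCycle A s C) (hirr : ∀ v, ¬A v v)
    {d : ℕ} (hdeg : SemidegreeAtLeast A d) {w z : V} (hw : w ∉ C) (hz : z ∉ C)
    (hwz : ReachAvoiding A C w z) :
    2 * (d + 1) ≤
      C.length + (avoidingAncestors A C w).card + (avoidingDescendants A C z).card := by
  have hin : (Finset.univ.filter (A · w)).card + 1 ≤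
      (C.toFinset.filter (A · w)).card + (avoidingAncestors A C w).card :=
    card_filter_add_one_le (R := fun a b => A b a) (hirr w)
      (mem_avoidingAncestors.2 ⟨hw, .refl⟩)
      fun a haw haC => mem_avoidingAncestors.2 ⟨haC, .single ⟨haC, hw, haw⟩⟩
  have hout : (Finset.univ.filter (A z ·)).card + 1 ≤
      (C.toFinset.filter (A z ·)).card + (avoidingDescendants A C z).card :=
    card_filter_add_one_le (hirr z) (mem_avoidingDescendants.2 ⟨hz, .refl⟩)
      fun a hza haC => mem_avoidingDescendants.2 ⟨haC, .single ⟨hz, haC, hza⟩⟩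
  have := hC.card_filter_add_card_filter_le hw hwz
  have := (hdeg w).2
  have := (hdeg z).1
  omega

theorem IsLongestSCycle.reachAvoiding (hC : IsLongestSCycle A s C) (hirr : ∀ v, ¬A v v)
    {d : ℕ} (hdeg : SemidegreeAtLeast A d) (hd : Fintype.card V < 2 * (d + 1)) {x y : V}
    (hx : x ∉ C) (hy : y ∉ C) : ReachAvoiding A C x y := by
  by_contra hxy
  have hn := card_filter_notMem_add_length (V := V) hC.1.2.1
  by_cases hyx : ReachAvoiding A C y x
  · have := hC.two_mul_add_one_le hirr hdeg hy hx hyx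
    have := card_avoidingAncestors_add_card_avoidingDescendants_le hxy
    omega
  · have := hC.two_mul_add_one_le hirr hdeg hx hx .refl
    have := hC.two_mul_add_one_le hirr hdeg hy hy .refl
    have := card_avoidingAncestors_add_card_avoidingDescendants_le hxy
    have := card_avoidingAncestors_add_card_avoidingDescendants_le hyx
    omega

theorem IsLongestSCycle.lt_length (hC : IsLongestSCycle A s C) (hirr : ∀ v, ¬A v v)
    {d : ℕ} (hdeg : SemidegreeAtLeast A d) (hd : Fintype.card V < 2 * (d + 1)) :
    d < C.length := by
  obtain ⟨h2, hnd, -⟩ := hC.1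
  by_cases hT : ∃ t ∈ C, ∃ x ∉ C, A t x
  · obtain ⟨t, ht, x, hx, htx⟩ := hT
    have hin : ∀ a, A a (cycSucc C t) → a ∈ C := fun a ha => by
      by_contra haC
      exact hC.not_detour ht hx htx (hC.reachAvoiding hirr hdeg hd hx haC) ha
    exact (hdeg _).2.trans_lt
      (card_filter_lt_length (R := fun a b => A b a) hnd (cycSucc_mem ht) (hirr _) hin)
  · obtain ⟨c, hc⟩ := List.exists_mem_of_length_pos (by omega : 0 < C.length)
    have hout : ∀ a, A c a → a ∈ C := fun a hca => by
      by_contra haC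
      exact hT ⟨c, hc, a, haC, hca⟩
    exact (hdeg c).1.trans_lt (card_filter_lt_length hnd hc (hirr c) hout)

end Counting

theorem longest_S_cycle_length_bound_general
    {V : Type*} [Fintype V] [DecidableEq V]
    (A : V → V → Prop) [DecidableRel A] (hirr : Irreflexive A)
    (n k : ℕ) (hn : n = Fintype.card V) (hk : 3 ≤ k)
    (hdeg : ∀ v : V, (n + k + 1) / 2 - 1 ≤ (Finset.univ.filter fun w => A v w).card ∧
                     (n + k + 1) / 2 - 1 ≤ (Finset.univ.filter fun w => A w v).card)
    (s : Fin k → V)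
    (C : List V) (hC : IsCycleList A C) (hCs : EncountersInOrder C s)
    (hmax : ∀ C' : List V, IsCycleList A C' → EncountersInOrder C' s → C'.length ≤ C.length) :
    (n + k + 1) / 2 ≤ C.length ∧
    (Finset.univ.filter fun v => (v ∉ C : Prop)).card ≤ (n - k) / 2 := by
  have hlen := IsLongestSCycle.lt_length ⟨hC, hCs, hmax⟩ hirr hdeg (by omega)
  have hH := card_filter_notMem_add_length (V := V) hC.2.1
  omega

/-- $|C| \ge \lceil (n+k)/2 \rceil$ and hence $|H| \le \lfloor (n-k)/2 \rfloor$. -/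
theorem longest_S_cycle_length_bound
    {V : Type*} [Fintype V] [DecidableEq V]
    (A : V → V → Prop) [DecidableRel A] (hirr : Irreflexive A)
    (n k : ℕ) (hn : n = Fintype.card V) (hk : 3 ≤ k)
    (hdeg : ∀ v : V, (n + k + 1) / 2 - 1 ≤ (Finset.univ.filter fun w => A v w).card ∧
                     (n + k + 1) / 2 - 1 ≤ (Finset.univ.filter fun w => A w v).card)
    (s : Fin k → V) (hs : Function.Injective s)
    (C : List V) (hC : IsCycleList A C) (hCs : EncountersInOrder C s)
    (hmax : ∀ C' : List V, IsCycleList A C' → EncountersInOrder C' s → C'.length ≤ C.length)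
    (hnotHam : ∃ v : V, v ∉ C) :
    (n + k + 1) / 2 ≤ C.length ∧
    (Finset.univ.filter fun v => (v ∉ C : Prop)).card ≤ (n - k) / 2 :=
  longest_S_cycle_length_bound_general A hirr n k hn hk hdeg s C hC hCs hmax
end

section
/- For even k ≥ 2 and sufficiently large n, there is a digraph D on n vertices with minimum semi-degree δ⁰(D) ≥ ⌈(n+k)/2⌉ - 2 which is not k-ordered: namely, let D consist of a complete digraph A of order ⌈n/2⌉ + k/2 - 1 and a complete digraph B of order ⌊n/2⌋ + k/2 sharing exactly k-1 vertices; choosing s_1, s_3, …, s_{k-1} in A \ B and s_2, s_4, …, s_k in B \ A, D has no directed cycle encountering s_1,…,s_k in this order. -/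
/-!
Every edge of `D` lies inside `A` or inside `B`, so a walk from `A \ B` to `B \ A`, or back,
passes through `A ∩ B`. A cycle meeting `s₁, …, s_k` in this order, with the `s_i` alternating
between `A \ B` and `B \ A`, makes `k` such passages along disjoint stretches of the cycle, hence
meets `k` distinct vertices of `A ∩ B`; but `|A ∩ B| = k - 1`. The degree bound is read off from
`|A| ≤ |B|`.
-/

open Finset

section Crossing

variable {V : Type*} {P Q : V → Prop} {A : V → V → Prop}

-- Along edges that stay inside `P` or inside `Q`, a vertex outside `Q` lies in `P \ Q` and one
-- outside `P` in `Q \ P`: this is the relation "`x` and `y` lie on opposite private sides".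
variable (P Q) in
def SwitchesSide (x y : V) : Prop :=
  (¬Q x ∧ ¬P y) ∨ (¬P x ∧ ¬Q y)

lemma exists_mem_inter_of_isChain (hA : ∀ x y, A x y → P x ∧ P y ∨ Q x ∧ Q y) {x y : V} :
    ∀ {u : List V}, (x :: (u ++ [y])).IsChain A → ¬Q x → ¬P y → ∃ z ∈ u, P z ∧ Q z
  | [], h, hQx, hPy => by
    rcases hA x y (List.isChain_pair.mp h) with ⟨-, hPy'⟩ | ⟨hQx', -⟩
    exacts [absurd hPy' hPy, absurd hQx' hQx]
  | z :: u, h, hQx, hPy => by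
    rw [List.cons_append, List.isChain_cons_cons] at h
    by_cases hPz : P z
    · by_cases hQz : Q z
      · exact ⟨z, List.mem_cons_self, hPz, hQz⟩
      · obtain ⟨w, hw, hPQw⟩ := exists_mem_inter_of_isChain hA h.2 hQz hPy
        exact ⟨w, List.mem_cons_of_mem z hw, hPQw⟩
    · rcases hA x z h.1 with ⟨-, hPz'⟩ | ⟨hQx', -⟩
      exacts [absurd hPz' hPz, absurd hQx' hQx]

variable [DecidablePred P] [DecidablePred Q]

lemma length_le_countP_of_isChain (hA : ∀ x y, A x y → P x ∧ P y ∨ Q x ∧ Q y) :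
    ∀ {S L : List V} {x : V}, (x :: L).IsChain A → S.Sublist L →
      (x :: S).IsChain (SwitchesSide P Q) → S.length ≤ L.countP (fun z => P z ∧ Q z)
  | [], _, _, _, _, _ => Nat.zero_le _
  | y :: S, L, x, hL, hSL, hS => by
    obtain ⟨L₁, L₂, rfl, hy, hSL₂⟩ := List.cons_sublist_iff.mp hSL
    obtain ⟨u, w, rfl⟩ := List.append_of_mem hy
    rw [List.isChain_cons_cons] at hS
    have hsplit := List.isChain_cons_split.mp
      (by simpa only [List.append_assoc, List.cons_append] using hL)
    have hu : 0 < u.countP (fun z => P z ∧ Q z) := by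
      rw [List.countP_pos_iff]
      rcases hS.1 with ⟨hQx, hPy⟩ | ⟨hPx, hQy⟩
      · simpa using exists_mem_inter_of_isChain hA hsplit.1 hQx hPy
      · simpa [and_comm] using exists_mem_inter_of_isChain (fun a b h => (hA a b h).symm)
          hsplit.1 hPx hQy
    have hrest := length_le_countP_of_isChain hA hsplit.2
      (hSL₂.trans (List.sublist_append_right w L₂)) hS.2
    simp only [List.length_cons, List.countP_append, List.countP_cons] at hrest ⊢
    omega

lemma length_le_countP_of_cycleChain (hA : ∀ x y, A x y → P x ∧ P y ∨ Q x ∧ Q y)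
    {l S : List V} (hl : Cycle.Chain A (l : Cycle V))
    (hS : Cycle.Chain (SwitchesSide P Q) (S : Cycle V)) {r : ℕ} (hSl : S.Sublist (l.rotate r)) :
    S.length ≤ l.countP (fun z => P z ∧ Q z) := by
  cases S with
  | nil => exact Nat.zero_le _
  | cons x S =>
    obtain ⟨L₁, L₂, hlr, hx, hSL₂⟩ := List.cons_sublist_iff.mp hSl
    obtain ⟨u, w, rfl⟩ := List.append_of_mem hx
    have hrot : (x :: (w ++ L₂ ++ u)) ~r l := by
      have h := List.isRotated_append (l := x :: (w ++ L₂)) (l' := u)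
      simp only [List.cons_append, List.append_assoc] at h hlr ⊢
      exact h.trans (hlr ▸ List.IsRotated.forall l r)
    rw [← Cycle.coe_eq_coe.mpr hrot, Cycle.chain_coe_cons] at hl
    rw [Cycle.chain_coe_cons] at hS
    have hsub : (S ++ [x]).Sublist (w ++ L₂ ++ u ++ [x]) :=
      ((hSL₂.trans (List.sublist_append_right w L₂)).trans
        (List.sublist_append_left _ u)).append_right [x]
    have hlen := length_le_countP_of_isChain hA hl hsub hS
    rw [(List.isRotated_append.trans hrot).perm.countP_eq] at hlen
    simpa using hlen

end Crossing

lemma IsCycleList.cycleChain {V : Type*} {A : V → V → Prop} {l : List V}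
    (hl : IsCycleList A l) : Cycle.Chain A (l : Cycle V) := by
  obtain ⟨hlen, -, hch, hwrap⟩ := hl
  have hne : l ≠ [] := List.ne_nil_of_length_pos (by omega)
  rw [Cycle.chain_ne_nil A hne, List.isChain_cons]
  refine ⟨fun y hy => hwrap _ ?_ y hy, hch⟩
  simp [List.getLast?_eq_some_getLast hne]

lemma List.Nodup.countP_le_card_filter {V : Type*} [Fintype V] [DecidableEq V] {p : V → Prop}
    [DecidablePred p] {l : List V} (hl : l.Nodup) : l.countP p ≤ #{v | p v} := by
  rw [← hl.card_eq_countP]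
  exact card_le_card (filter_subset_filter _ (subset_univ _))

lemma cycleChain_switchesSide_ofFn {V : Type*} {P Q : V → Prop} {k : ℕ} (hk : Even k)
    {s : Fin k → V} (heven : ∀ j : Fin k, Even (j : ℕ) → ¬Q (s j))
    (hodd : ∀ j : Fin k, Odd (j : ℕ) → ¬P (s j)) :
    Cycle.Chain (SwitchesSide P Q) (List.ofFn s : Cycle V) := by
  -- the congruence covers both the steps `i → i + 1` and the closing step `k - 1 → 0`
  have side : ∀ i j : Fin k, (i : ℕ) + 1 ≡ j [MOD 2] → SwitchesSide P Q (s i) (s j) := by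
    intro i j hij
    unfold Nat.ModEq at hij
    rcases Nat.even_or_odd (i : ℕ) with hi | hi
    · have hj : Odd (j : ℕ) := by rw [Nat.even_iff] at hi; rw [Nat.odd_iff]; omega
      exact Or.inl ⟨heven i hi, hodd j hj⟩
    · have hj : Even (j : ℕ) := by rw [Nat.odd_iff] at hi; rw [Nat.even_iff]; omega
      exact Or.inr ⟨hodd i hi, heven j hj⟩
  rcases Nat.eq_zero_or_pos k with rfl | hpos
  · exact Cycle.Chain.nil _
  have hne : List.ofFn s ≠ [] := mt List.ofFn_eq_nil_iff.mp hpos.ne'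
  rw [Cycle.chain_ne_nil _ hne, List.getLast_ofFn, List.isChain_cons, List.isChain_ofFn]
  refine ⟨fun y hy => ?_, fun i hi => side _ _ rfl⟩
  rw [List.head?_eq_some_head hne, List.head_ofFn, Option.mem_some_iff] at hy
  subst hy
  refine side _ _ ?_
  rw [Nat.sub_add_cancel hpos]
  exact Nat.even_iff.mp hk

theorem IsCycleList.not_encountersInOrder {V : Type*} [Fintype V] [DecidableEq V]
    {P Q : V → Prop} [DecidablePred P] [DecidablePred Q] {A : V → V → Prop}
    (hA : ∀ x y, A x y → P x ∧ P y ∨ Q x ∧ Q y) {l : List V} (hl : IsCycleList A l)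
    {k : ℕ} {s : Fin k → V} (hs : Cycle.Chain (SwitchesSide P Q) (List.ofFn s : Cycle V))
    (hk : #{v | P v ∧ Q v} < k) : ¬EncountersInOrder l s := by
  rintro ⟨r, hsub⟩
  have hcount := length_le_countP_of_cycleChain hA hl.cycleChain hs hsub
  have hcard := hl.2.1.countP_le_card_filter (p := fun v => P v ∧ Q v)
  rw [List.length_ofFn] at hcount
  omega

section CliquePair

variable {V : Type*} {P Q : V → Prop}

variable (P Q) in
def cliquePairAdj (v w : V) : Prop := v ≠ w ∧ (P v ∧ P w ∨ Q v ∧ Q w)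

instance [DecidableEq V] [DecidablePred P] [DecidablePred Q] :
    DecidableRel (cliquePairAdj P Q) :=
  fun _ _ => inferInstanceAs (Decidable (_ ∧ _))

lemma cliquePairAdj_comm {v w : V} : cliquePairAdj P Q v w ↔ cliquePairAdj P Q w v := by
  unfold cliquePairAdj; tauto

lemma min_card_sub_one_le_card_cliquePairAdj [Fintype V] [DecidableEq V] [DecidablePred P]
    [DecidablePred Q] {v : V} (hv : P v ∨ Q v) :
    min #{w | P w} #{w | Q w} - 1 ≤ #{w | cliquePairAdj P Q v w} := by
  rcases hv with hv | hv
  · calc min #{w | P w} #{w | Q w} - 1 ≤ #(({w | P w} : Finset V).erase v) :=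
          (Nat.sub_le_sub_right (min_le_left _ _) 1).trans pred_card_le_card_erase
      _ ≤ #{w | cliquePairAdj P Q v w} := card_le_card fun w hw => by
          simp only [mem_erase, mem_filter, mem_univ, true_and] at hw ⊢
          exact ⟨Ne.symm hw.1, Or.inl ⟨hv, hw.2⟩⟩
  · calc min #{w | P w} #{w | Q w} - 1 ≤ #(({w | Q w} : Finset V).erase v) :=
          (Nat.sub_le_sub_right (min_le_right _ _) 1).trans pred_card_le_card_erase
      _ ≤ #{w | cliquePairAdj P Q v w} := card_le_card fun w hw => by
          simp only [mem_erase, mem_filter, mem_univ, true_and] at hw ⊢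
          exact ⟨Ne.symm hw.1, Or.inr ⟨hv, hw.2⟩⟩

end CliquePair

lemma Fin.card_filter_le_val {n c : ℕ} : #{i : Fin n | c ≤ (i : ℕ)} = n - c := by
  simp_rw [← not_lt]
  rw [filter_not, card_sdiff_of_subset (filter_subset _ _), card_univ, Fintype.card_fin,
    Fin.card_filter_val_lt]
  omega

lemma Fin.card_filter_val_lt_and_le {n a c : ℕ} (ha : a ≤ n) :
    #{i : Fin n | (i : ℕ) < a ∧ c ≤ (i : ℕ)} = a - c := by
  rw [← card_map Fin.valEmbedding, ← Nat.card_Ico c a]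
  congr 1
  ext x
  simp only [mem_map, mem_filter, mem_univ, true_and, Fin.valEmbedding_apply, mem_Ico]
  constructor
  · rintro ⟨i, ⟨h1, h2⟩, rfl⟩
    omega
  · rintro ⟨h1, h2⟩
    exact ⟨⟨x, by omega⟩, ⟨h2, h1⟩, rfl⟩

lemma Fin.exists_injective_alternating {m n a c : ℕ} (hmc : m ≤ c) (hca : c ≤ a)
    (han : a + m ≤ n) :
    ∃ s : Fin (m + m) → Fin n, Function.Injective s ∧
      (∀ j : Fin (m + m), Even (j : ℕ) → (s j : ℕ) < c) ∧
      (∀ j : Fin (m + m), Odd (j : ℕ) → a ≤ (s j : ℕ)) := by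
  refine ⟨fun j => ⟨if Even (j : ℕ) then j / 2 else a + j / 2, by split_ifs <;> omega⟩,
    fun i j hij => ?_, fun j hj => ?_, fun j hj => ?_⟩
  · have := i.2
    have := j.2
    simp only [Fin.mk.injEq, Nat.even_iff] at hij
    ext
    split_ifs at hij <;> omega
  · simp only [hj, if_true]
    omega
  · simp only [if_neg (Nat.not_even_iff_odd.mpr hj)]
    omega

/-- For even $k \ge 2$ and large $n$ there is a digraph on $n$ vertices with
minimum semi-degree $\lceil (n+k)/2 \rceil - 2$ which is not k-ordered. -/
theorem extremal_example_not_k_ordered (k : ℕ) (hk : 2 ≤ k) (hke : Even k) :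
    ∃ n₀ : ℕ, ∀ n : ℕ, n₀ ≤ n →
      ∃ (A : Fin n → Fin n → Prop) (_ : DecidableRel A),
        Irreflexive A ∧
        (∀ v : Fin n,
          (n + k + 1) / 2 - 2 ≤ (Finset.univ.filter fun w => A v w).card ∧
          (n + k + 1) / 2 - 2 ≤ (Finset.univ.filter fun w => A w v).card) ∧
        ¬ (∀ s : Fin k → Fin n, Function.Injective s →
            ∃ l : List (Fin n), IsCycleList A l ∧ EncountersInOrder l s) := by
  obtain ⟨m, rfl⟩ := hke
  refine ⟨4 * m, fun n hn => ?_⟩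
  -- `A = [0, a)` has `⌈n/2⌉ + m - 1` vertices, `B = [c, n)` has `⌊n/2⌋ + m`, and `|A ∩ B| = 2m - 1`
  set a := (n + 1) / 2 + m - 1
  set c := (n + 1) / 2 - m
  let P : Fin n → Prop := fun v => (v : ℕ) < a
  let Q : Fin n → Prop := fun v => c ≤ (v : ℕ)
  refine ⟨cliquePairAdj P Q, inferInstance, fun _ h => h.1 rfl, fun v => ?_, fun hord => ?_⟩
  · have hout := min_card_sub_one_le_card_cliquePairAdj (P := P) (Q := Q) (v := v)
      (by simp only [P, Q]; omega)
    have hin : #{w | cliquePairAdj P Q w v} = #{w | cliquePairAdj P Q v w} := by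
      rw [filter_congr fun w _ => cliquePairAdj_comm]
    rw [Fin.card_filter_val_lt, Fin.card_filter_le_val] at hout
    omega
  · obtain ⟨s, hinj, heven, hodd⟩ :=
      Fin.exists_injective_alternating (n := n) (m := m) (a := a) (c := c) (by omega) (by omega)
        (by omega)
    obtain ⟨l, hl, hls⟩ := hord s hinj
    refine hl.not_encountersInOrder (fun _ _ h => h.2) ?_ ?_ hls
    · exact cycleChain_switchesSide_ofFn ⟨m, rfl⟩
        (fun j hj => not_le.mpr (heven j hj)) (fun j hj => not_lt.mpr (hodd j hj))
    · rw [Fin.card_filter_val_lt_and_le (by omega)]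
      omega
end

section
/- Let D be a strongly connected digraph such that d^+(x) + d^-(x) ≥ |D| for every vertex x. Then D contains a directed Hamilton cycle. -/
/-!
Take a longest cycle `C` and suppose some vertex lies outside it. If a path `P` outside `C` starts
at an out-neighbour of `c i` and ends at an in-neighbour of `c (i + q)` with `1 ≤ q ≤ |P|`,
replacing the arc of `C` between them by `P` gives a longer cycle. Counting around `C` the positions
of the arcs into the first vertex of `P` and out of its last vertex therefore bounds their numbers,
together with `|P|`, by `|C| + 1`. For a single vertex this leaves at least `|H|` arcs inside the
digraph `H` outside `C`, so every terminal or initial strong component of `H` satisfies the degree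
condition and is Hamiltonian by induction. Going around such a cycle shows that a terminal
component `K` receives no arc from `C`, so each of its vertices sends at least `|C| + 2 - |K|` arcs
to `C`; dually for an initial component `L`. A path inside `H` from `L` to a terminal component,
extended around both cycles, then violates the bound.
-/

open Finset

universe u

variable {V : Type u} {A : V → V → Prop}

theorem ZMod.forall_of_imp_add_one {m : ℕ} [NeZero m] {P : ZMod m → Prop}
    (h : ∀ i, P i → P (i + 1)) {i₀ : ZMod m} (h₀ : P i₀) (j : ZMod m) : P j := by
  have key : ∀ k : ℕ, P (i₀ + k) := fun k => by
    induction k with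
    | zero => simpa using h₀
    | succ k ih => simpa [add_assoc] using h _ ih
  simpa using key (j - i₀).val

theorem ZMod.card_add_card_add_le {m : ℕ} [NeZero m] {X Y : Finset (ZMod m)}
    (hX : X.Nonempty) (hY : Y.Nonempty) {p : ℕ} (hp : 1 ≤ p)
    (h : ∀ x ∈ X, ∀ q : ℕ, 1 ≤ q → q ≤ p → x + q ∉ Y) : #X + #Y + p ≤ m + 1 := by
  induction p, hp using Nat.le_induction generalizing X with
  | base =>
    have hdisj : Disjoint (X.image (· + 1)) Y := by
      rw [disjoint_left]
      rintro _ hx'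
      obtain ⟨x, hx, rfl⟩ := mem_image.1 hx'
      simpa using h x hx 1 le_rfl le_rfl
    have := (card_union_of_disjoint hdisj).symm.trans_le (card_le_univ _)
    rw [card_image_of_injective _ (add_left_injective 1), ZMod.card] at this
    omega
  | succ p hp ih =>
    have hgrow : ¬ X.image (· + 1) ⊆ X := by
      intro hsub
      have hXuniv : ∀ i, i ∈ X :=
        ZMod.forall_of_imp_add_one (fun i hi => hsub (mem_image_of_mem _ hi)) hX.choose_spec
      obtain ⟨y, hy⟩ := hY
      exact h (y - 1) (hXuniv _) 1 le_rfl (by omega) (by simpa using hy)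
    obtain ⟨z, hzX', hzX⟩ := not_subset.1 hgrow
    have hwin : ∀ x ∈ X ∪ X.image (· + 1), ∀ q : ℕ, 1 ≤ q → q ≤ p → x + q ∉ Y := by
      simp only [mem_union, mem_image]
      rintro _ (hx | ⟨x, hx, rfl⟩) q hq1 hqp
      · exact h _ hx q hq1 (by omega)
      · simpa [add_assoc, add_comm (1 : ZMod m)] using h x hx (q + 1) (by omega) (by omega)
    have hcard : #X + 1 ≤ #(X ∪ X.image (· + 1)) := by
      rw [← card_insert_of_notMem hzX]
      exact card_le_card (insert_subset (mem_union_right _ hzX') subset_union_left)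
    have := ih (hX.mono subset_union_left) hwin
    omega

theorem Relation.ReflTransGen.exists_nodup_isChain_until {R : V → V → Prop} {p : V → Prop}
    {x y : V} (h : Relation.ReflTransGen R x y) (hy : p y) :
    ∃ Q b, p b ∧ (∀ v ∈ Q, ¬ p v) ∧ (Q ++ [b]).IsChain R ∧ (Q ++ [b]).head? = some x ∧
      (Q ++ [b]).Nodup := by
  induction h using Relation.ReflTransGen.head_induction_on with
  | refl => exact ⟨[], y, hy, by simp, by simp, by simp, by simp⟩
  | @head a z haz _ ih =>
    obtain ⟨Q, b, hb, hQ, hch, hhead, hnd⟩ := ih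
    by_cases ha : p a
    · exact ⟨[], a, ha, by simp, by simp, by simp, by simp⟩
    by_cases haQ : a ∈ Q
    · obtain ⟨s, t, rfl⟩ := List.append_of_mem haQ
      refine ⟨a :: t, b, hb, fun v hv => hQ v (by simp_all), ?_, by simp, ?_⟩
      · simpa using (show (s ++ (a :: t ++ [b])).IsChain R by simpa using hch).right_of_append
      · exact (List.sublist_append_right s _).nodup (by simpa using hnd)
    · refine ⟨a :: Q, b, hb, by simpa [ha] using hQ, ?_, by simp, ?_⟩
      · rw [List.cons_append, List.isChain_cons]
        exact ⟨fun c hc => by rw [hhead] at hc; cases hc; exact haz, hch⟩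
      · rw [List.cons_append, List.nodup_cons]
        refine ⟨?_, hnd⟩
        simp only [List.mem_append, List.mem_singleton, not_or]
        exact ⟨haQ, fun hab => ha (hab ▸ hb)⟩

theorem List.IsChain.append_of_concat {R : V → V → Prop} {l m : List V} {b : V}
    (h : (l ++ [b]).IsChain R) (hm : m.IsChain R) (hb : m.head? = some b) :
    (l ++ m).IsChain R := by
  rw [List.isChain_append] at h ⊢
  exact ⟨h.1, hm, fun x hx y hy => h.2.2 x hx y (by simp_all)⟩

theorem Relation.ReflTransGen.exists_rel_of_not {R : V → V → Prop} {p : V → Prop} {x y : V}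
    (h : Relation.ReflTransGen R x y) (hx : p x) (hy : ¬ p y) : ∃ a b, p a ∧ ¬ p b ∧ R a b := by
  induction h with
  | refl => exact absurd hx hy
  | @tail b c _ hbc ih =>
    by_cases hb : p b
    · exact ⟨b, c, hb, hy, hbc⟩
    · exact ih hb

def IsCycleFn (A : V → V → Prop) {m : ℕ} (c : ZMod m → V) : Prop :=
  Function.Injective c ∧ ∀ i, A (c i) (c (i + 1))

section ArcPath

variable {m : ℕ} (c : ZMod m → V) (s : ZMod m) (k : ℕ)

def arcPath : List V := List.ofFn fun t : Fin k => c (s + t)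

@[simp] theorem length_arcPath : (arcPath c s k).length = k := List.length_ofFn

theorem mem_arcPath {v : V} : v ∈ arcPath c s k ↔ ∃ t < k, c (s + t) = v := by
  simp [arcPath, List.mem_ofFn, Fin.exists_iff]

variable {c s k}

theorem isChain_arcPath (hc : ∀ i, A (c i) (c (i + 1))) : (arcPath c s k).IsChain A := by
  refine List.isChain_ofFn.2 fun t _ => ?_
  simpa [add_assoc] using hc (s + t)

theorem nodup_arcPath (hc : Function.Injective c) (hk : k ≤ m) : (arcPath c s k).Nodup :=
  List.nodup_ofFn.2 fun t u h => by
    have := (ZMod.natCast_eq_natCast_iff' _ _ _).1 (add_left_cancel (hc h))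
    rwa [Nat.mod_eq_of_lt (by omega), Nat.mod_eq_of_lt (by omega), Fin.val_inj] at this

theorem head?_arcPath (hk : 0 < k) : (arcPath c s k).head? = some (c s) := by
  obtain ⟨k, rfl⟩ := Nat.exists_eq_add_of_lt hk
  simp [arcPath, List.ofFn_succ]

theorem getLast?_arcPath (hk : 0 < k) :
    (arcPath c s k).getLast? = some (c (s + (k - 1 : ℕ))) := by
  rw [List.getLast?_eq_some_getLast (by simp [arcPath]; omega)]
  simp [arcPath, List.getLast_ofFn]

theorem getLast?_arcPath_self [NeZero m] : (arcPath c s m).getLast? = some (c (s - 1)) := by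
  rw [getLast?_arcPath (Nat.pos_of_neZero m), Nat.cast_pred (Nat.pos_of_neZero m),
    ZMod.natCast_self, zero_sub, sub_eq_add_neg]

theorem mem_arcPath_self_iff [NeZero m] {v : V} : v ∈ arcPath c s m ↔ ∃ i, c i = v := by
  refine (mem_arcPath c s m).trans ⟨fun ⟨t, _, h⟩ => ⟨_, h⟩, ?_⟩
  rintro ⟨i, rfl⟩
  exact ⟨(i - s).val, ZMod.val_lt _, by simp⟩

end ArcPath

namespace IsCycleList

theorem exists_isCycleFn {l : List V} (hl : IsCycleList A l) :
    ∃ c : ZMod l.length → V, IsCycleFn A c ∧ ∀ v, v ∈ l ↔ ∃ i, c i = v := by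
  obtain ⟨hlen, hnd, hch, hwrap⟩ := hl
  have : NeZero l.length := ⟨by omega⟩
  refine ⟨fun i => l[i.val]'(ZMod.val_lt i), ⟨fun i j h => ?_, fun i => ?_⟩, fun v => ?_⟩
  · exact ZMod.val_injective _ ((hnd.getElem_inj_iff).1 h)
  · rcases lt_or_ge (i.val + 1) l.length with hi | hi
    · have hval : (i + 1).val = i.val + 1 := by
        rw [ZMod.val_add, ZMod.val_one'' (by omega), Nat.mod_eq_of_lt hi]
      simpa [hval] using List.isChain_iff_getElem.1 hch i.val hi
    · have hv : i.val = l.length - 1 := by have := ZMod.val_lt i; omega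
      have hi1 : i + 1 = 0 := by
        rw [← ZMod.natCast_zmod_val i, hv, ← Nat.cast_succ, Nat.succ_eq_add_one,
          Nat.sub_add_cancel (by omega), ZMod.natCast_self]
      refine hwrap _ ?_ _ ?_
      · simp [List.getLast?_eq_getElem?, hv]
      · simp [List.head?_eq_getElem?, hi1]
  · simp only [List.mem_iff_getElem]
    constructor
    · rintro ⟨n, hn, rfl⟩
      exact ⟨n, by simp [ZMod.val_natCast_of_lt hn]⟩
    · rintro ⟨i, rfl⟩
      exact ⟨i.val, ZMod.val_lt i, rfl⟩

theorem map {W : Type*} {B : W → W → Prop} {f : W → V} (hf : Function.Injective f)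
    (hB : ∀ a b, B a b → A (f a) (f b)) {l : List W} (hl : IsCycleList B l) :
    IsCycleList A (l.map f) := by
  obtain ⟨hlen, hnd, hch, hwrap⟩ := hl
  refine ⟨by simpa using hlen, hnd.map hf, List.isChain_map_of_isChain f hB hch, ?_⟩
  simp only [List.getLast?_map, List.head?_map, Option.mem_map]
  rintro _ ⟨a, ha, rfl⟩ _ ⟨b, hb, rfl⟩
  exact hB _ _ (hwrap a ha b hb)

theorem reverse {l : List V} (hl : IsCycleList A l) : IsCycleList (flip A) l.reverse := by
  obtain ⟨hlen, hnd, hch, hwrap⟩ := hl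
  refine ⟨by simpa using hlen, List.nodup_reverse.2 hnd, List.isChain_reverse.2 hch, ?_⟩
  simp only [List.getLast?_reverse, List.head?_reverse]
  exact fun a ha b hb => hwrap b hb a ha

end IsCycleList

theorem exists_isCycleList_of_rel (hirr : ∀ a, ¬ A a a)
    (hconn : ∀ u v, Relation.ReflTransGen A u v) {a b : V} (hab : A a b) :
    ∃ l, IsCycleList A l := by
  obtain ⟨Q, a', ha', -, hch, hhead, hnd⟩ :=
    (hconn b a).exists_nodup_isChain_until (p := (· = a)) rfl
  subst a'
  refine ⟨Q ++ [a], ?_, hnd, hch, fun x hx y hy => ?_⟩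
  · rcases Q with _ | ⟨c, Q⟩
    · simp only [List.nil_append, List.head?_singleton, Option.some_inj] at hhead
      exact absurd (hhead ▸ hab) (hirr a)
    · simp
  · simp only [List.getLast?_concat, Option.mem_some_iff] at hx
    rw [hhead, Option.mem_some_iff] at hy
    exact hx ▸ hy ▸ hab

def IsLongestCycle (A : V → V → Prop) (C : List V) : Prop :=
  IsCycleList A C ∧ ∀ l, IsCycleList A l → l.length ≤ C.length

theorem exists_isLongestCycle [Finite V] {l : List V} (hl : IsCycleList A l) :
    ∃ C, IsLongestCycle A C := by
  have := Fintype.ofFinite V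
  let S := {n | ∃ l : List V, IsCycleList A l ∧ l.length = n}
  have hS : BddAbove S := ⟨Fintype.card V, by rintro _ ⟨l, hl, rfl⟩; exact hl.2.1.length_le_card⟩
  obtain ⟨C, hC, hlen⟩ := Nat.sSup_mem (s := S) ⟨_, l, hl, rfl⟩ hS
  exact ⟨C, hC, fun l hl => hlen ▸ le_csSup hS ⟨l, hl, rfl⟩⟩

theorem IsLongestCycle.reverse {C : List V} (hC : IsLongestCycle A C) :
    IsLongestCycle (flip A) C.reverse :=
  ⟨hC.1.reverse, fun l hl => by simpa using hC.2 _ hl.reverse⟩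

theorem false_of_bypass {m : ℕ} [NeZero m] (hmax : ∀ l, IsCycleList A l → l.length ≤ m)
    {c : ZMod m → V} (hc : IsCycleFn A c) {P : List V} (hP : P.IsChain A) (hPnd : P.Nodup)
    (hPc : ∀ v ∈ P, ∀ i, c i ≠ v) {i : ZMod m} {q : ℕ} (hq : 1 ≤ q) (hqP : q ≤ P.length)
    (hin : ∀ u ∈ P.head?, A (c i) u) (hout : ∀ w ∈ P.getLast?, A w (c (i + q))) : False := by
  have hm := Nat.pos_of_neZero m
  set q' := (q - 1) % m + 1 with hq'
  have hq'm : q' ≤ m := Nat.mod_lt _ hm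
  have hcast : (q' : ZMod m) = q := by
    rw [hq', Nat.cast_succ, ZMod.natCast_mod, ← Nat.cast_succ, Nat.succ_eq_add_one,
      Nat.sub_add_cancel hq]
  have hwrap : i + q' + ((m - q' : ℕ) : ZMod m) = i := by
    rw [add_assoc, ← Nat.cast_add, Nat.add_sub_cancel' hq'm, ZMod.natCast_self, add_zero]
  have hPne : P ≠ [] := List.ne_nil_of_length_pos (by omega)
  have hlong := hmax (arcPath c (i + q') (m - q' + 1) ++ P) ⟨?_, ?_, ?_, ?_⟩
  · have : q' ≤ q := by have := Nat.mod_le (q - 1) m; omega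
    simp only [List.length_append, length_arcPath] at hlong
    omega
  · simp only [List.length_append, length_arcPath]
    omega
  · refine List.Nodup.append (nodup_arcPath hc.1 (by omega)) hPnd fun v hv hvP => ?_
    obtain ⟨t, -, rfl⟩ := (mem_arcPath _ _ _).1 hv
    exact hPc _ hvP _ rfl
  · refine List.isChain_append.2 ⟨isChain_arcPath hc.2, hP, fun a ha b hb => ?_⟩
    rw [getLast?_arcPath (by omega), Nat.add_sub_cancel, hwrap, Option.mem_some_iff] at ha
    exact ha ▸ hin b hb
  · rw [List.getLast?_append_of_ne_nil _ hPne, List.head?_append, head?_arcPath (by omega)]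
    rintro a ha b ⟨⟩
    rw [hcast]
    exact hout a ha

namespace IsLongestCycle

variable [DecidableEq V] [DecidableRel A] {C : List V}

theorem card_add_card_add_length_le (hC : IsLongestCycle A C) {P : List V}
    (hP : P.IsChain A) (hPnd : P.Nodup) (hPC : ∀ v ∈ P, v ∉ C) {u w : V}
    (hu : P.head? = some u) (hw : P.getLast? = some w)
    (hin : {v ∈ C.toFinset | A v u}.Nonempty) (hout : {v ∈ C.toFinset | A w v}.Nonempty) :
    #{v ∈ C.toFinset | A v u} + #{v ∈ C.toFinset | A w v} + P.length ≤ C.length + 1 := by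
  obtain ⟨c, hc, hcC⟩ := hC.1.exists_isCycleFn
  have : NeZero C.length := ⟨by have := hC.1.1; omega⟩
  have hcount : ∀ p : V → Prop, [DecidablePred p] →
      #{v ∈ C.toFinset | p v} = #{i | p (c i)} := by
    intro p _
    rw [← card_image_of_injective _ hc.1]
    congr 1
    ext v
    simp only [mem_filter, List.mem_toFinset, hcC, mem_image, mem_univ, true_and]
    grind
  rw [← card_pos, hcount] at hin hout
  rw [hcount, hcount]
  have hPne : P ≠ [] := by rintro rfl; simp at hu
  refine ZMod.card_add_card_add_le (card_pos.1 hin) (card_pos.1 hout)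
    (List.length_pos_of_ne_nil hPne) fun i hi q hq hqP hiq => ?_
  refine false_of_bypass (i := i) hC.2 hc hP hPnd
    (fun v hv j hj => hPC v hv ((hcC v).2 ⟨j, hj⟩)) hq hqP ?_ ?_
  · simpa [hu] using hi
  · simpa [hw] using hiq

theorem card_add_card_le (hC : IsLongestCycle A C) {y : V} (hy : y ∉ C) :
    #{v ∈ C.toFinset | A y v} + #{v ∈ C.toFinset | A v y} ≤ C.length := by
  have hle : ∀ p : V → Prop, [DecidablePred p] → #{v ∈ C.toFinset | p v} ≤ C.length :=
    fun p _ => (card_filter_le _ _).trans (List.toFinset_card_le _)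
  rcases {v ∈ C.toFinset | A y v}.eq_empty_or_nonempty with hout | hout
  · rw [hout, card_empty, zero_add]
    exact hle _
  rcases {v ∈ C.toFinset | A v y}.eq_empty_or_nonempty with hin | hin
  · rw [hin, card_empty, add_zero]
    exact hle _
  have := hC.card_add_card_add_length_le (P := [y]) (u := y) (w := y) (by simp) (by simp) (by simpa)
    rfl rfl hin hout
  simp only [List.length_singleton] at this
  omega

/-- Bypasses running once around `d` show that an arc from `C` into `d (j + 1)` forces one into
`d j`, and then that the number of arcs from `d j` to `C` strictly increases with `j` once
positive, which is impossible on a cycle. -/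
theorem card_in_eq_zero_of_isCycleFn (hC : IsLongestCycle A C) {κ : ℕ} [NeZero κ]
    {d : ZMod κ → V} (hd : IsCycleFn A d) (hdC : ∀ j, d j ∉ C) (hκ : κ ≤ C.length)
    (hdeg : ∀ j, C.length + 2 ≤
      κ + #{v ∈ C.toFinset | A (d j) v} + #{v ∈ C.toFinset | A v (d j)})
    (hexit : ∃ j, {v ∈ C.toFinset | A (d j) v}.Nonempty) (j : ZMod κ) :
    #{v ∈ C.toFinset | A v (d j)} = 0 := by
  set s := fun j => #{v ∈ C.toFinset | A (d j) v}
  set t := fun j => #{v ∈ C.toFinset | A v (d j)}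
  have hwrap : ∀ j, 0 < t (j + 1) → 0 < s j → t (j + 1) + s j + κ ≤ C.length + 1 := by
    intro j ht hs
    have := hC.card_add_card_add_length_le (P := arcPath d (j + 1) κ) (isChain_arcPath hd.2)
      (nodup_arcPath hd.1 le_rfl) ?_ (head?_arcPath (Nat.pos_of_neZero κ)) getLast?_arcPath_self
      (card_pos.1 ht) (by simpa using card_pos.1 hs)
    · simpa using this
    · intro v hv
      obtain ⟨_, _, rfl⟩ := (mem_arcPath _ _ _).1 hv
      exact hdC _
  by_contra hj
  have hpos_t : ∀ j, 0 < t j := by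
    have hback : ∀ j, 0 < t (j + 1) → 0 < t j := by
      intro j ht
      have := hdeg j
      by_cases hs : s j = 0
      · simp only [s, t] at hs ⊢; omega
      · have := hwrap j ht (Nat.pos_of_ne_zero hs)
        simp only [s, t] at this ⊢; omega
    intro i
    simpa using ZMod.forall_of_imp_add_one (P := fun i => 0 < t (-i))
      (fun i hi => hback _ (by simpa using hi)) (i₀ := -j)
      (by simp only [neg_neg]; exact Nat.pos_of_ne_zero hj) (-i)
  obtain ⟨j₀, hj₀⟩ := hexit
  have hs₀ : 0 < s j₀ := card_pos.2 hj₀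
  have hgrow : ∀ k : ℕ, s j₀ + k ≤ s (j₀ + k) := by
    intro k
    induction k with
    | zero => simp
    | succ k ih =>
      have h1 := hwrap (j₀ + k) (hpos_t _) (by omega)
      have h2 := hdeg (j₀ + k + 1)
      simp only [s, t, Nat.cast_succ, ← add_assoc] at h1 h2 ih ⊢
      omega
  have := hgrow κ
  simp only [ZMod.natCast_self, add_zero] at this
  exact (Nat.pos_of_neZero κ).ne' (by omega)

/-- Going around `L`, along `Q` and around `K` would give a path outside `C` too long for
`card_add_card_add_length_le`. -/
theorem false_of_bridge (hC : IsLongestCycle A C) {L K Q : List V}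
    (hL : IsCycleList A L) (hK : IsCycleList A K)
    (hLin : ∀ y ∈ L, C.length + 2 ≤ L.length + #{v ∈ C.toFinset | A v y})
    (hKout : ∀ y ∈ K, C.length + 2 ≤ K.length + #{v ∈ C.toFinset | A y v})
    {w b : V} (hw : w ∈ L) (hb : b ∈ K) (hQ : (w :: (Q ++ [b])).IsChain A)
    (hnd : (L ++ Q ++ K).Nodup) (hPC : ∀ v ∈ L ++ Q ++ K, v ∉ C) : False := by
  obtain ⟨dL, hdL, hdLL⟩ := hL.exists_isCycleFn
  obtain ⟨dK, hdK, hdKK⟩ := hK.exists_isCycleFn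
  have : NeZero L.length := ⟨by have := hL.1; omega⟩
  have : NeZero K.length := ⟨by have := hK.1; omega⟩
  obtain ⟨jw, rfl⟩ := (hdLL w).1 hw
  obtain ⟨jb, rfl⟩ := (hdKK _).1 hb
  set PL := arcPath dL (jw + 1) L.length
  set PK := arcPath dK jb K.length
  have hperm : (PL ++ (Q ++ PK)).Perm (L ++ Q ++ K) := by
    rw [← List.append_assoc]
    refine List.Perm.append (List.Perm.append_right Q
      ((List.perm_ext_iff_of_nodup (nodup_arcPath hdL.1 le_rfl) hL.2.1).2 fun v => ?_))
      ((List.perm_ext_iff_of_nodup (nodup_arcPath hdK.1 le_rfl) hK.2.1).2 fun v => ?_)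
    · rw [mem_arcPath_self_iff, hdLL]
    · rw [mem_arcPath_self_iff, hdKK]
  rw [List.isChain_cons] at hQ
  have hPKhead : PK.head? = some (dK jb) := head?_arcPath (Nat.pos_of_neZero _)
  have hchain : (PL ++ (Q ++ PK)).IsChain A := by
    refine List.isChain_append.2 ⟨isChain_arcPath hdL.2,
      hQ.2.append_of_concat (isChain_arcPath hdK.2) hPKhead, fun x hx y hy => ?_⟩
    rw [getLast?_arcPath_self, add_sub_cancel_right, Option.mem_some_iff] at hx
    subst hx
    exact hQ.1 y (by simpa [List.head?_append, hPKhead] using hy)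
  have hhead : (PL ++ (Q ++ PK)).head? = some (dL (jw + 1)) := by
    rw [List.head?_append, head?_arcPath (Nat.pos_of_neZero _), Option.some_or]
  have hlast : (PL ++ (Q ++ PK)).getLast? = some (dK (jb - 1)) := by
    rw [List.getLast?_append, List.getLast?_append, getLast?_arcPath_self, Option.some_or,
      Option.some_or]
  have hin := hLin _ ((hdLL _).2 ⟨jw + 1, rfl⟩)
  have hout := hKout _ ((hdKK _).2 ⟨jb - 1, rfl⟩)
  have hLC := hC.2 _ hL
  have hKC := hC.2 _ hK
  have := hC.card_add_card_add_length_le hchain (hperm.nodup_iff.2 hnd)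
    (fun v hv => hPC v (hperm.mem_iff.1 hv)) hhead hlast (card_pos.1 (by omega))
    (card_pos.1 (by omega))
  simp only [List.length_append, PL, PK, length_arcPath] at this
  omega

end IsLongestCycle

section Components

variable (A) (H K : Finset V)

def IsOutClosed : Prop :=
  K ⊆ H ∧ ∀ y ∈ K, ∀ w ∈ H, A y w → w ∈ K

/-- A terminal strong component of the digraph induced on `H`. -/
def IsTerminalComponent : Prop :=
  Minimal (fun K => K.Nonempty ∧ IsOutClosed A H K) K

variable {A H K}

theorem IsOutClosed.exists_isTerminalComponent (hK : IsOutClosed A H K) (hne : K.Nonempty) :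
    ∃ K' ⊆ K, IsTerminalComponent A H K' :=
  exists_minimal_le_of_wellFoundedLT _ K ⟨hne, hK⟩

theorem IsTerminalComponent.reflTransGen (hK : IsTerminalComponent A H K) (u v : K) :
    Relation.ReflTransGen (fun a b : K => A a b) u v := by
  classical
  let R : Finset V := {w ∈ K | ∃ hw : w ∈ K, Relation.ReflTransGen (fun a b : K => A a b) u ⟨w, hw⟩}
  have hRK : R ⊆ K := filter_subset _ _
  have hR : R.Nonempty ∧ IsOutClosed A H R := by
    refine ⟨⟨u, mem_filter.2 ⟨u.2, u.2, .refl⟩⟩, hRK.trans hK.1.2.1, fun y hy w hw hyw => ?_⟩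
    obtain ⟨-, hyK, hy⟩ := mem_filter.1 hy
    have hwK := hK.1.2.2 y hyK w hw hyw
    exact mem_filter.2 ⟨hwK, hwK, hy.tail (show A y w from hyw)⟩
  obtain ⟨-, _, huv⟩ := mem_filter.1 (hK.2 hR hRK v.2)
  exact huv

theorem IsOutClosed.card_le_card_add_card [DecidableEq V] [DecidableRel A]
    (hK : IsOutClosed A H K) {y : V}
    (hy : y ∈ K) (hH : #H ≤ #{w ∈ H | A y w} + #{w ∈ H | A w y}) :
    #K ≤ #{w ∈ K | A y w} + #{w ∈ K | A w y} := by
  have hout : {w ∈ H | A y w} = {w ∈ K | A y w} :=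
    (filter_subset_filter _ hK.1).antisymm' fun w hw => by
      obtain ⟨hwH, hyw⟩ := mem_filter.1 hw
      exact mem_filter.2 ⟨hK.2 y hy w hwH hyw, hyw⟩
  have hin : {w ∈ H | A w y} ⊆ {w ∈ K | A w y} ∪ (H \ K) := fun w hw => by
    by_cases hwK : w ∈ K <;> simp_all
  rw [hout] at hH
  have := (card_le_card hin).trans (card_union_le _ _)
  rw [card_sdiff_of_subset hK.1] at this
  have := card_le_card hK.1
  omega

theorem IsOutClosed.exists_rel_notMem (hconn : ∀ u v, Relation.ReflTransGen A u v)
    (hK : IsOutClosed A H K) (hne : K.Nonempty) {z : V} (hz : z ∉ H) :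
    ∃ a ∈ K, ∃ b ∉ H, A a b := by
  obtain ⟨y, hy⟩ := hne
  obtain ⟨a, b, ha, hb, hab⟩ :=
    (hconn y z).exists_rel_of_not (p := (· ∈ K)) hy fun h => hz (hK.1 h)
  exact ⟨a, ha, b, fun hbH => hb (hK.2 a ha b hbH hab), hab⟩

theorem IsOutClosed.sdiff_of_flip [DecidableEq V] {L : Finset V} (hL : IsOutClosed (flip A) H L) :
    IsOutClosed A H (H \ L) := by
  refine ⟨sdiff_subset, fun y hy w hw hyw => mem_sdiff.2 ⟨hw, fun hwL => ?_⟩⟩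
  exact (mem_sdiff.1 hy).2 (hL.2 w hwL y (mem_sdiff.1 hy).1 hyw)

theorem IsOutClosed.exists_path_to_terminalComponent (hK : IsOutClosed A H K) {x : V}
    (hx : x ∈ K) :
    ∃ K' ⊆ K, IsTerminalComponent A H K' ∧ ∃ Q b, b ∈ K' ∧ (∀ v ∈ Q, v ∈ K ∧ v ∉ K') ∧
      (Q ++ [b]).IsChain A ∧ (Q ++ [b]).head? = some x ∧ (Q ++ [b]).Nodup := by
  classical
  let R := fun a b => A a b ∧ b ∈ K
  have hY : IsOutClosed A H {v ∈ K | Relation.ReflTransGen R x v} := by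
    refine ⟨(filter_subset _ _).trans hK.1, fun y hy w hw hyw => ?_⟩
    obtain ⟨hyK, hxy⟩ := mem_filter.1 hy
    have hwK := hK.2 y hyK w hw hyw
    exact mem_filter.2 ⟨hwK, hxy.tail ⟨hyw, hwK⟩⟩
  obtain ⟨K', hK'Y, hK'⟩ := hY.exists_isTerminalComponent ⟨x, mem_filter.2 ⟨hx, .refl⟩⟩
  obtain ⟨b, hb⟩ := hK'.1.1
  obtain ⟨Q, b', hb', hQK', hch, hhead, hnd⟩ :=
    (mem_filter.1 (hK'Y hb)).2.exists_nodup_isChain_until (p := (· ∈ K')) hb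
  have hmemK : ∀ v ∈ Q ++ [b'], v ∈ K := hch.induction _ _ (fun _ _ h _ => h.2) fun hne => by
    rw [List.head?_eq_some_head hne, Option.some_inj] at hhead
    exact hhead ▸ hx
  exact ⟨K', hK'Y.trans (filter_subset _ _), hK', Q, b', hb',
    fun v hv => ⟨hmemK v (by simp [hv]), hQK' v hv⟩, hch.imp fun _ _ h => h.1, hhead, hnd⟩

end Components

section Induction

variable [Fintype V] [DecidableEq V] [DecidableRel A]

theorem card_filter_eq_add_card_filter_compl (S : Finset V)
    (p : V → Prop) [DecidablePred p] : #{w | p w} = #{w ∈ S | p w} + #{w ∈ Sᶜ | p w} := by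
  rw [← card_union_of_disjoint (disjoint_filter_filter disjoint_compl_right), ← filter_union,
    union_compl]

def GhouilaHouriBelow (n : ℕ) : Prop :=
  ∀ (W : Type u) [Fintype W] [Nonempty W] (B : W → W → Prop) [DecidableRel B],
    Fintype.card W < n → (∀ a, ¬ B a a) → (∀ a b, Relation.ReflTransGen B a b) →
    (∀ x, Fintype.card W ≤ #{w | B x w} + #{w | B w x}) → ∃ l, IsCycleList B l ∧ ∀ v, v ∈ l

theorem GhouilaHouriBelow.exists_isCycleList (ih : GhouilaHouriBelow.{u} (Fintype.card V))
    (hirr : ∀ a, ¬ A a a) {K : Finset V} (hK : K ≠ univ) (hne : K.Nonempty)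
    (hconn : ∀ u v : K, Relation.ReflTransGen (fun a b : K => A a b) u v)
    (hdeg : ∀ y ∈ K, #K ≤ #{w ∈ K | A y w} + #{w ∈ K | A w y}) :
    ∃ l, IsCycleList A l ∧ l.toFinset = K := by
  have : Nonempty K := hne.to_subtype
  have hsub : ∀ (p : V → Prop) [DecidablePred p], #{w : K | p w} = #{w ∈ K | p w} := by
    intro p _
    rw [← card_map (Function.Embedding.subtype _)]
    congr 1
    ext
    simp [and_comm]
  obtain ⟨l, hl, hlK⟩ := ih K (fun a b => A a b) (by simpa [card_lt_iff_ne_univ] using hK)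
    (fun a => hirr a) hconn fun y => by rw [Fintype.card_coe, hsub, hsub (A · y)]; exact hdeg y y.2
  refine ⟨l.map Subtype.val, hl.map Subtype.val_injective fun _ _ h => h, ?_⟩
  ext v
  simp only [List.mem_toFinset, List.mem_map, Subtype.exists, exists_and_right, exists_eq_right]
  exact ⟨fun ⟨h, _⟩ => h, fun h => ⟨h, hlK _⟩⟩

namespace IsLongestCycle

variable {C : List V}

theorem card_compl_le (hdeg : ∀ x, Fintype.card V ≤ #{w | A x w} + #{w | A w x})
    (hC : IsLongestCycle A C) {y : V} (hy : y ∉ C) :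
    #C.toFinsetᶜ ≤ #{w ∈ C.toFinsetᶜ | A y w} + #{w ∈ C.toFinsetᶜ | A w y} := by
  have h := hdeg y
  rw [card_filter_eq_add_card_filter_compl C.toFinset,
    card_filter_eq_add_card_filter_compl C.toFinset (A · y)] at h
  have := hC.card_add_card_le hy
  rw [card_compl, List.toFinset_card_of_nodup hC.1.2.1]
  omega

theorem add_two_le_of_isOutClosed
    (hdeg : ∀ x, Fintype.card V ≤ #{w | A x w} + #{w | A w x}) (hirr : ∀ a, ¬ A a a)
    (hC : IsLongestCycle A C) {K : Finset V} (hK : IsOutClosed A C.toFinsetᶜ K) {y : V}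
    (hy : y ∈ K) :
    C.length + 2 ≤ #K + #{v ∈ C.toFinset | A y v} + #{v ∈ C.toFinset | A v y} := by
  have h := hdeg y
  rw [card_filter_eq_add_card_filter_compl C.toFinset,
    card_filter_eq_add_card_filter_compl C.toFinset (A · y)] at h
  have hout : {w ∈ C.toFinsetᶜ | A y w} ⊆ K.erase y := fun w hw => by
    obtain ⟨hwH, hyw⟩ := mem_filter.1 hw
    exact mem_erase.2 ⟨fun h => hirr y (h ▸ hyw), hK.2 y hy w hwH hyw⟩
  have hin : {w ∈ C.toFinsetᶜ | A w y} ⊆ C.toFinsetᶜ.erase y := fun w hw => by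
    obtain ⟨hwH, hwy⟩ := mem_filter.1 hw
    exact mem_erase.2 ⟨fun h => hirr y (h ▸ hwy), hwH⟩
  have h1 := card_le_card hout
  have h2 := card_le_card hin
  rw [card_erase_of_mem hy] at h1
  rw [card_erase_of_mem (hK.1 hy)] at h2
  have hH : #C.toFinsetᶜ = Fintype.card V - C.length := by
    rw [card_compl, List.toFinset_card_of_nodup hC.1.2.1]
  have := card_pos.2 ⟨y, hK.1 hy⟩
  have := card_pos.2 ⟨y, hy⟩
  omega

theorem card_in_eq_zero_and_le_of_isTerminalComponent
    (hdeg : ∀ x, Fintype.card V ≤ #{w | A x w} + #{w | A w x}) (hirr : ∀ a, ¬ A a a)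
    (hconn : ∀ u v, Relation.ReflTransGen A u v) (hC : IsLongestCycle A C) {K : Finset V}
    (hK : IsTerminalComponent A C.toFinsetᶜ K) {l : List V} (hl : IsCycleList A l)
    (hlK : l.toFinset = K) {y : V} (hy : y ∈ l) :
    #{v ∈ C.toFinset | A v y} = 0 ∧ C.length + 2 ≤ l.length + #{v ∈ C.toFinset | A y v} := by
  have hmemK : ∀ {v}, v ∈ l ↔ v ∈ K := by simp [← hlK]
  have hlen : l.length = #K := by rw [← hlK, List.toFinset_card_of_nodup hl.2.1]
  have hKC : ∀ {v}, v ∈ l → v ∉ C := fun hv => by simpa using hK.1.2.1 (hmemK.1 hv)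
  have hbound := fun {v} (hv : v ∈ l) =>
    hlen ▸ hC.add_two_le_of_isOutClosed hdeg hirr hK.1.2 (hmemK.1 hv)
  obtain ⟨d, hd, hdl⟩ := hl.exists_isCycleFn
  have : NeZero l.length := ⟨by have := hl.1; omega⟩
  have hd_mem : ∀ j, d j ∈ l := fun j => (hdl _).2 ⟨j, rfl⟩
  have hexit : ∃ j, {v ∈ C.toFinset | A (d j) v}.Nonempty := by
    obtain ⟨c₀, hc₀⟩ : ∃ c₀, c₀ ∈ C := List.exists_mem_of_length_pos (by have := hC.1.1; omega)
    obtain ⟨a, ha, b, hb, hab⟩ :=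
      IsOutClosed.exists_rel_notMem hconn hK.1.2 hK.1.1 (z := c₀) (by simpa using hc₀)
    obtain ⟨j, rfl⟩ := (hdl a).1 (hmemK.2 ha)
    exact ⟨j, b, by simpa [hab] using hb⟩
  have hzero := hC.card_in_eq_zero_of_isCycleFn hd (fun j => hKC (hd_mem j)) (hC.2 l hl)
    (fun j => hbound (hd_mem j)) hexit
  obtain ⟨j, rfl⟩ := (hdl y).1 hy
  have := hbound hy
  have := hzero j
  exact ⟨hzero j, by omega⟩

theorem exists_isCycleList_of_isTerminalComponent
    (hdeg : ∀ x, Fintype.card V ≤ #{w | A x w} + #{w | A w x})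
    (ih : GhouilaHouriBelow.{u} (Fintype.card V)) (hirr : ∀ a, ¬ A a a)
    (hconn : ∀ u v, Relation.ReflTransGen A u v) (hC : IsLongestCycle A C) {K : Finset V}
    (hK : IsTerminalComponent A C.toFinsetᶜ K) :
    ∃ l, IsCycleList A l ∧ l.toFinset = K ∧ ∀ y ∈ l,
      #{v ∈ C.toFinset | A v y} = 0 ∧ C.length + 2 ≤ l.length + #{v ∈ C.toFinset | A y v} := by
  obtain ⟨c₀, hc₀⟩ : ∃ c₀, c₀ ∈ C := List.exists_mem_of_length_pos (by have := hC.1.1; omega)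
  have hKC : ∀ {y}, y ∈ K → y ∉ C := fun hy => by simpa using hK.1.2.1 hy
  obtain ⟨l, hl, hlK⟩ := ih.exists_isCycleList hirr (fun h => hKC (h ▸ mem_univ c₀) hc₀) hK.1.1
    hK.reflTransGen fun y hy => hK.1.2.card_le_card_add_card hy (hC.card_compl_le hdeg (hKC hy))
  exact ⟨l, hl, hlK, fun y hy =>
    hC.card_in_eq_zero_and_le_of_isTerminalComponent hdeg hirr hconn hK hl hlK hy⟩

/-- An initial strong component is a terminal one for the reversed arcs. -/
theorem exists_isCycleList_of_isInitialComponent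
    (hdeg : ∀ x, Fintype.card V ≤ #{w | A x w} + #{w | A w x})
    (ih : GhouilaHouriBelow.{u} (Fintype.card V)) (hirr : ∀ a, ¬ A a a)
    (hconn : ∀ u v, Relation.ReflTransGen A u v) (hC : IsLongestCycle A C) {L : Finset V}
    (hL : IsTerminalComponent (flip A) C.toFinsetᶜ L) :
    ∃ l, IsCycleList A l ∧ l.toFinset = L ∧ ∀ y ∈ l,
      #{v ∈ C.toFinset | A y v} = 0 ∧ C.length + 2 ≤ l.length + #{v ∈ C.toFinset | A v y} := by
  let : DecidableRel (flip A) := fun a b => inferInstanceAs (Decidable (A b a))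
  obtain ⟨l, hl, hlL, hbound⟩ := hC.reverse.exists_isCycleList_of_isTerminalComponent
    (fun x => (hdeg x).trans_eq (add_comm _ _)) ih hirr
    (fun u w => Relation.reflTransGen_swap.2 (hconn w u)) (by rwa [List.toFinset_reverse])
  refine ⟨l.reverse, hl.reverse, by rwa [List.toFinset_reverse], fun y hy => ?_⟩
  simpa [flip] using hbound y (List.mem_reverse.1 hy)

theorem forall_mem (hdeg : ∀ x, Fintype.card V ≤ #{w | A x w} + #{w | A w x})
    (ih : GhouilaHouriBelow.{u} (Fintype.card V)) (hirr : ∀ a, ¬ A a a)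
    (hconn : ∀ u v, Relation.ReflTransGen A u v) (hC : IsLongestCycle A C) (v : V) : v ∈ C := by
  by_contra hv
  obtain ⟨c₀, hc₀⟩ : ∃ c₀, c₀ ∈ C := List.exists_mem_of_length_pos (by have := hC.1.1; omega)
  have hH : ∀ {y}, y ∈ C.toFinsetᶜ ↔ y ∉ C := by simp
  obtain ⟨L, -, hL⟩ := (show IsOutClosed (flip A) C.toFinsetᶜ C.toFinsetᶜ from
    ⟨subset_rfl, fun _ _ _ hw _ => hw⟩).exists_isTerminalComponent ⟨v, hH.2 hv⟩
  obtain ⟨lL, hlL, hlLL, hLbound⟩ :=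
    hC.exists_isCycleList_of_isInitialComponent hdeg ih hirr hconn hL
  have hmemL : ∀ {y}, y ∈ lL ↔ y ∈ L := by simp [← hlLL]
  obtain ⟨y₀, hy₀⟩ := hL.1.1
  obtain ⟨w, x, hw, hx, hwx⟩ :=
    (hconn y₀ c₀).exists_rel_of_not (p := (· ∈ L)) hy₀ fun h => hH.1 (hL.1.2.1 h) hc₀
  have hxC : x ∉ C := fun hxC => by
    have := (hLbound w (hmemL.2 hw)).1
    exact not_nonempty_iff_eq_empty.2 (card_eq_zero.1 this) ⟨x, by simp [hxC, hwx]⟩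
  obtain ⟨K, hKX, hK, Q, b, hb, hQ, hch, hhead, hnd⟩ :=
    hL.1.2.sdiff_of_flip.exists_path_to_terminalComponent (mem_sdiff.2 ⟨hH.2 hxC, hx⟩)
  obtain ⟨lK, hlK, hlKK, hKbound⟩ :=
    hC.exists_isCycleList_of_isTerminalComponent hdeg ih hirr hconn hK
  have hmemK : ∀ {y}, y ∈ lK ↔ y ∈ K := by simp [← hlKK]
  refine hC.false_of_bridge (Q := Q) hlL hlK (fun y hy => (hLbound y hy).2)
    (fun y hy => (hKbound y hy).2) (hmemL.2 hw) (hmemK.2 hb) ?_ ?_ ?_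
  · exact List.isChain_cons.2 ⟨fun y hy => by rw [hhead] at hy; cases hy; exact hwx, hch⟩
  · refine List.Nodup.append (List.Nodup.append hlL.2.1
      ((List.sublist_append_left Q [b]).nodup hnd) fun y hyL hyQ => ?_) hlK.2.1 fun y hy hyK => ?_
    · exact (mem_sdiff.1 (hQ y hyQ).1).2 (hmemL.1 hyL)
    · have hyK := hmemK.1 hyK
      rcases List.mem_append.1 hy with hyL | hyQ
      · exact (mem_sdiff.1 (hKX hyK)).2 (hmemL.1 hyL)
      · exact (hQ y hyQ).2 hyK
  · intro y hy
    simp only [List.mem_append] at hy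
    rcases hy with (hyL | hyQ) | hyK
    · exact hH.1 (hL.1.2.1 (hmemL.1 hyL))
    · exact hH.1 (mem_sdiff.1 (hQ y hyQ).1).1
    · exact hH.1 (mem_sdiff.1 (hKX (hmemK.1 hyK))).1

end IsLongestCycle

theorem exists_isCycleList_forall_mem [Nonempty V] (ih : GhouilaHouriBelow.{u} (Fintype.card V))
    (hirr : ∀ a, ¬ A a a) (hconn : ∀ u v, Relation.ReflTransGen A u v)
    (hdeg : ∀ x, Fintype.card V ≤ #{w | A x w} + #{w | A w x}) :
    ∃ l, IsCycleList A l ∧ ∀ v, v ∈ l := by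
  obtain ⟨x⟩ := ‹Nonempty V›
  obtain ⟨a, b, hab⟩ : ∃ a b, A a b := by
    by_contra! h
    have := hdeg x
    simp [h] at this
  obtain ⟨l, hl⟩ := exists_isCycleList_of_rel hirr hconn hab
  obtain ⟨C, hC⟩ := exists_isLongestCycle hl
  exact ⟨C, hC.1, hC.forall_mem hdeg ih hirr hconn⟩

end Induction

theorem ghouila_houri_general
    {V : Type*} [Fintype V] [Nonempty V]
    (A : V → V → Prop) [DecidableRel A] (hirr : Irreflexive A)
    (hconn : ∀ u v : V, Relation.ReflTransGen A u v)
    (hdeg : ∀ x : V, Fintype.card V ≤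
      (Finset.univ.filter fun w => A x w).card + (Finset.univ.filter fun w => A w x).card) :
    ∃ l : List V, IsCycleList A l ∧ ∀ v, v ∈ l := by
  classical
  induction hn : Fintype.card V using Nat.strong_induction_on generalizing V with
  | _ n ih =>
    subst hn
    exact exists_isCycleList_forall_mem (fun _ _ _ B _ hW hirr hconn hdeg =>
      ih _ hW B hirr hconn hdeg rfl) hirr hconn hdeg

/-- Ghouila-Houri: a strongly connected digraph with $d^+(x)+d^-(x) \ge |D|$ for
every vertex $x$ is Hamiltonian. -/
theorem ghouila_houri
    {V : Type*} [Fintype V] [DecidableEq V] [Nonempty V]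
    (A : V → V → Prop) [DecidableRel A] (hirr : Irreflexive A)
    (hconn : ∀ u v : V, Relation.ReflTransGen A u v)
    (hdeg : ∀ x : V, Fintype.card V ≤
      (Finset.univ.filter fun w => A x w).card + (Finset.univ.filter fun w => A w x).card) :
    ∃ l : List V, IsCycleList A l ∧ ∀ v, v ∈ l :=
  ghouila_houri_general A hirr hconn hdeg
end
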